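/- arXiv:1902.09406 — 7 statements merged into one kernel-verified Lean document; each statement's English description precedes it below -/
import Mathlib

section
/- Let Y be a finite non-empty set and let Ē be an upper expectation on L̄_b(Y). Then Ē satisfies (E10): for any non-decreasing sequence {f_n}_{n∈ℕ₀} in L̄_b(Y), lim_{n→∞} Ē(f_n) = Ē(lim_{n→∞} f_n), where the limit of the functions is taken pointwise. -/
open Filter Topology

/-- A function to the extended reals is bounded below by some real number. -/
def BddBelowF {Y : Type*} (f : Y → EReal) : Prop :=
  ∃ M : ℝ, ∀ y, (M : EReal) ≤ f y

/-- A gamble: a bounded real-valued function. -/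
def IsGamble {Y : Type*} (f : Y → ℝ) : Prop :=
  ∃ B : ℝ, ∀ y, |f y| ≤ B

/-- An upper expectation on the bounded-below extended-real functions on `Y`:
axioms E1 (constants), E2 (subadditivity), E3 (positive/`+∞` homogeneity on
non-negative functions) and E4 (monotonicity). -/
structure IsUpperExpectation {Y : Type*} (E : (Y → EReal) → EReal) : Prop where
  const : ∀ c : ℝ, E (fun _ => (c : EReal)) = (c : EReal)
  subadd : ∀ f g : Y → EReal, BddBelowF f → BddBelowF g →
    E (fun y => f y + g y) ≤ E f + E g
  homog : ∀ lam : EReal, 0 < lam → ∀ f : Y → EReal, BddBelowF f → (∀ y, 0 ≤ f y) →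
    E (fun y => lam * f y) = lam * E f
  mono : ∀ f g : Y → EReal, BddBelowF f → BddBelowF g → (∀ y, f y ≤ g y) → E f ≤ E g

section Aux

variable {Y : Type*} {E : (Y → EReal) → EReal}

lemma bddBelowF_const (c : ℝ) : BddBelowF (fun _ : Y => (c : EReal)) :=
  ⟨c, fun _ => le_refl _⟩

lemma bddBelowF_add_const {h : Y → EReal} (hb : BddBelowF h) (c : ℝ) :
    BddBelowF (fun y => h y + (c : EReal)) := by
  obtain ⟨M, hM⟩ := hb
  exact ⟨M + c, fun y => by rw [EReal.coe_add]; exact add_le_add (hM y) le_rfl⟩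

lemma bddBelowF_of_nonneg {h : Y → EReal} (hh : ∀ y, 0 ≤ h y) : BddBelowF h :=
  ⟨0, fun y => by simpa using hh y⟩

lemma E_ne_bot (hE : IsUpperExpectation E) {h : Y → EReal} (hb : BddBelowF h) : E h ≠ ⊥ := by
  obtain ⟨M, hM⟩ := id hb
  have h1 : (M : EReal) ≤ E h := by
    have := hE.mono _ _ (bddBelowF_const M) hb hM
    rwa [hE.const] at this
  intro hbot
  rw [hbot, le_bot_iff] at h1
  exact EReal.coe_ne_bot M h1

lemma E_add_const_le (hE : IsUpperExpectation E) {h : Y → EReal} (hb : BddBelowF h) (c : ℝ) :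
    E (fun y => h y + (c : EReal)) ≤ E h + (c : EReal) := by
  have := hE.subadd h (fun _ => (c : EReal)) hb (bddBelowF_const c)
  rwa [hE.const] at this

lemma le_E_add_const (hE : IsUpperExpectation E) {h : Y → EReal} (hb : BddBelowF h) (c : ℝ) :
    E h + (c : EReal) ≤ E (fun y => h y + (c : EReal)) := by
  have h1 := hE.subadd (fun y => h y + (c : EReal)) (fun _ => ((-c : ℝ) : EReal))
    (bddBelowF_add_const hb c) (bddBelowF_const (-c))
  rw [hE.const] at h1
  have h2 : (fun y => (h y + (c : EReal)) + ((-c : ℝ) : EReal)) = h := by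
    funext y
    rw [EReal.coe_neg, ← sub_eq_add_neg]
    exact EReal.add_sub_cancel_right
  rw [h2] at h1
  have h3 : E (fun y => h y + (c : EReal)) + ((-c : ℝ) : EReal) + (c : EReal)
      = E (fun y => h y + (c : EReal)) := by
    rw [EReal.coe_neg, ← sub_eq_add_neg]
    exact EReal.sub_add_cancel
  calc E h + (c : EReal) ≤ E (fun y => h y + (c : EReal)) + ((-c : ℝ) : EReal) + (c : EReal) :=
        add_le_add h1 le_rfl
    _ = E (fun y => h y + (c : EReal)) := h3

end Aux

/-- Proposition 3 (E10): on a finite non-empty set, an upper expectation is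
continuous with respect to non-decreasing sequences of bounded-below functions. -/
theorem stmt1 {Y : Type*} [Fintype Y] [Nonempty Y] (E : (Y → EReal) → EReal)
    (hE : IsUpperExpectation E)
    (fn : ℕ → Y → EReal) (hb : ∀ n, BddBelowF (fn n)) (hmono : Monotone fn)
    (f : Y → EReal) (hlim : ∀ y, Tendsto (fun n => fn n y) atTop (𝓝 (f y))) :
    Tendsto (fun n => E (fn n)) atTop (𝓝 (E f)) := by
  obtain ⟨M0, hM0⟩ := hb 0
  have hfn_ge : ∀ n y, (M0 : EReal) ≤ fn n y := fun n y =>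
    (hM0 y).trans (hmono (Nat.zero_le n) y)
  have hf_ge : ∀ y, (M0 : EReal) ≤ f y := fun y =>
    ge_of_tendsto (hlim y) (Eventually.of_forall fun n => hfn_ge n y)
  have hbf : BddBelowF f := ⟨M0, hf_ge⟩
  have hfn_le_f : ∀ n y, fn n y ≤ f y := fun n y =>
    ge_of_tendsto (hlim y) (eventually_atTop.2 ⟨n, fun m hm => hmono hm y⟩)
  have hf_ne_bot : ∀ y, f y ≠ ⊥ := fun y hy => by
    have := hf_ge y; rw [hy, le_bot_iff] at this; exact EReal.coe_ne_bot M0 this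
  have hEmono : Monotone fun n => E (fn n) := fun n m hnm =>
    hE.mono _ _ (hb n) (hb m) (fun y => hmono hnm y)
  set L := ⨆ n, E (fn n) with hLdef
  have htd : Tendsto (fun n => E (fn n)) atTop (𝓝 L) := tendsto_atTop_iSup hEmono
  have hL_le : L ≤ E f := iSup_le fun n => hE.mono _ _ (hb n) hbf (hfn_le_f n)
  have hle_L : ∀ n, E (fn n) ≤ L := fun n => by rw [hLdef]; exact le_iSup (fun n => E (fn n)) n
  -- the indicator of the set where f is infinite
  set ind : Y → EReal := fun y => if f y = ⊤ then 1 else 0 with hind_def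
  have hind_nonneg : ∀ y, (0 : EReal) ≤ ind y := by
    intro y; by_cases h : f y = ⊤ <;> simp [hind_def, h]
  have hind_bdd : BddBelowF ind := bddBelowF_of_nonneg hind_nonneg
  have hEind_nonneg : (0 : EReal) ≤ E ind := by
    have := hE.mono (fun _ => ((0 : ℝ) : EReal)) ind (bddBelowF_const 0) hind_bdd
      (fun y => by rw [EReal.coe_zero]; exact hind_nonneg y)
    rw [hE.const] at this
    exact_mod_cast this
  have key : E f ≤ L := by
    rcases hEind_nonneg.lt_or_eq with hpos | hzero
    · -- E ind > 0 : then L = ⊤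
      have hEind_le_one : E ind ≤ 1 := by
        have := hE.mono ind (fun _ => ((1 : ℝ) : EReal)) hind_bdd (bddBelowF_const 1)
          (fun y => by by_cases h : f y = ⊤ <;> norm_num [hind_def, h])
        rwa [hE.const, EReal.coe_one] at this
      have hEind_ne_top : E ind ≠ ⊤ := fun h => by
        rw [h, top_le_iff] at hEind_le_one
        have h1 : ((1 : ℝ) : EReal) = ⊤ := by rw [← EReal.coe_one] at hEind_le_one; exact hEind_le_one
        exact EReal.coe_ne_top 1 h1
      have hEind_ne_bot : E ind ≠ ⊥ := fun h => by
        rw [h] at hpos; exact absurd hpos (by simp)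
      set p : ℝ := (E ind).toReal with hp_def
      have hp_eq : (p : EReal) = E ind := EReal.coe_toReal hEind_ne_top hEind_ne_bot
      have hp_pos : 0 < p := by
        have h0 : (0 : EReal) < (p : EReal) := by rw [hp_eq]; exact hpos
        exact_mod_cast h0
      have hLtop : L = ⊤ := by
        rw [EReal.eq_top_iff_forall_lt]
        intro K
        set M : ℝ := max ((K - M0 + 1) / p) 1 with hM_def
        have hM_pos : (0 : ℝ) < M := lt_of_lt_of_le one_pos (le_max_right _ _)
        have hMp : K - M0 + 1 ≤ M * p := by
          have h1 : (K - M0 + 1) / p ≤ M := le_max_left _ _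
          calc K - M0 + 1 = ((K - M0 + 1) / p) * p := by field_simp
            _ ≤ M * p := mul_le_mul_of_nonneg_right h1 hp_pos.le
        have hmul_nonneg : ∀ y, (0 : EReal) ≤ (M : EReal) * ind y := fun y =>
          mul_nonneg (by exact_mod_cast hM_pos.le) (hind_nonneg y)
        -- find N with fn N ≥ M * ind + M0 pointwise
        have hev : ∀ᶠ n in atTop, ∀ y, (M : EReal) * ind y + (M0 : EReal) ≤ fn n y := by
          rw [eventually_all]
          intro y
          by_cases hy : f y = ⊤
          · have hlt : (((M + M0 : ℝ)) : EReal) < f y := by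
              rw [hy]; exact EReal.coe_lt_top _
            refine ((hlim y).eventually_const_lt hlt).mono fun n hn => ?_
            simp only [hind_def, hy, if_true, mul_one]
            rw [← EReal.coe_add]
            exact hn.le
          · refine Eventually.of_forall fun n => ?_
            simp only [hind_def, hy, if_false, mul_zero, zero_add]
            exact hfn_ge n y
        obtain ⟨N, hN⟩ := hev.exists
        have hbM : BddBelowF (fun y => (M : EReal) * ind y) := bddBelowF_of_nonneg hmul_nonneg
        have h1 : E (fun y => (M : EReal) * ind y + (M0 : EReal)) ≤ E (fn N) :=
          hE.mono _ _ (bddBelowF_add_const hbM M0) (hb N) hN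
        have h2 : E (fun y => (M : EReal) * ind y) + (M0 : EReal)
            ≤ E (fun y => (M : EReal) * ind y + (M0 : EReal)) := le_E_add_const hE hbM M0
        have h3 : E (fun y => (M : EReal) * ind y) = ((M * p : ℝ) : EReal) := by
          rw [hE.homog (M : EReal) (by exact_mod_cast hM_pos) ind hind_bdd hind_nonneg,
            ← hp_eq, ← EReal.coe_mul]
        have h5 : (K : EReal) < ((M * p + M0 : ℝ) : EReal) := by
          exact_mod_cast (by linarith : K < M * p + M0)
        calc (K : EReal) < ((M * p + M0 : ℝ) : EReal) := h5
          _ = ((M * p : ℝ) : EReal) + (M0 : EReal) := by rw [EReal.coe_add]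
          _ = E (fun y => (M : EReal) * ind y) + (M0 : EReal) := by rw [h3]
          _ ≤ E (fun y => (M : EReal) * ind y + (M0 : EReal)) := h2
          _ ≤ E (fn N) := h1
          _ ≤ L := hle_L N
      rw [hLtop]; exact le_top
    · -- E ind = 0
      set g : Y → EReal := fun y => if f y = ⊤ then (M0 : EReal) else f y with hg_def
      have hg_bdd : BddBelowF g := by
        refine ⟨M0, fun y => ?_⟩
        by_cases hy : f y = ⊤
        · simp [hg_def, hy]
        · simpa [hg_def, hy] using hf_ge y
      have htopind_nonneg : ∀ y, (0 : EReal) ≤ ⊤ * ind y := fun y =>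
        mul_nonneg le_top (hind_nonneg y)
      have hEf_le_Eg : E f ≤ E g := by
        have h1 : ∀ y, f y ≤ g y + ⊤ * ind y := by
          intro y
          by_cases hy : f y = ⊤
          · simp only [hg_def, hind_def, hy, if_true, mul_one]
            exact le_of_le_of_eq le_top (EReal.add_top_of_ne_bot (EReal.coe_ne_bot M0)).symm
          · simp [hg_def, hind_def, hy]
        have h2 := hE.mono f (fun y => g y + ⊤ * ind y) hbf
          (by obtain ⟨Mg, hMg⟩ := id hg_bdd
              exact ⟨Mg, fun y => (hMg y).trans (le_add_of_nonneg_right (htopind_nonneg y))⟩) h1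
        have h3 := hE.subadd g (fun y => ⊤ * ind y) hg_bdd (bddBelowF_of_nonneg htopind_nonneg)
        have h4 : E (fun y => ⊤ * ind y) = 0 := by
          rw [hE.homog ⊤ (by simp) ind hind_bdd hind_nonneg, ← hzero, mul_zero]
        calc E f ≤ E g + E (fun y => ⊤ * ind y) := h2.trans h3
          _ = E g := by rw [h4, add_zero]
      have hEg_le : ∀ ε : ℝ, 0 < ε → E g ≤ L + (ε : EReal) := by
        intro ε hε
        have hev : ∀ᶠ n in atTop, ∀ y, g y ≤ fn n y + (ε : EReal) := by
          rw [eventually_all]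
          intro y
          by_cases hy : f y = ⊤
          · refine Eventually.of_forall fun n => ?_
            simp only [hg_def, hy, if_true]
            exact (hfn_ge n y).trans (le_add_of_nonneg_right (by exact_mod_cast hε.le))
          · set r : ℝ := (f y).toReal with hr
            have hry : (r : EReal) = f y := EReal.coe_toReal hy (hf_ne_bot y)
            have hlt : (((r - ε : ℝ)) : EReal) < f y := by
              rw [← hry]; exact_mod_cast sub_lt_self r hε
            refine ((hlim y).eventually_const_lt hlt).mono fun n hn => ?_
            simp only [hg_def, hy, if_false]
            calc f y = ((r - ε : ℝ) : EReal) + (ε : EReal) := by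
                  rw [← EReal.coe_add, sub_add_cancel, hry]
              _ ≤ fn n y + (ε : EReal) := add_le_add hn.le le_rfl
        obtain ⟨N, hN⟩ := hev.exists
        calc E g ≤ E (fun y => fn N y + (ε : EReal)) :=
              hE.mono _ _ hg_bdd (bddBelowF_add_const (hb N) ε) hN
          _ ≤ E (fn N) + (ε : EReal) := E_add_const_le hE (hb N) ε
          _ ≤ L + (ε : EReal) := add_le_add (hle_L N) le_rfl
      -- conclude E f ≤ L
      by_contra hcon
      push_neg at hcon
      have hLne_top : L ≠ ⊤ := hcon.ne_top
      have hLne_bot : L ≠ ⊥ := by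
        intro h
        have := (le_iSup (fun n => E (fn n)) 0).trans_eq h
        rw [le_bot_iff] at this
        exact E_ne_bot hE (hb 0) this
      obtain ⟨c, hc1, hc2⟩ := EReal.exists_between_coe_real hcon
      set l : ℝ := L.toReal with hl_def
      have hl_eq : (l : EReal) = L := EReal.coe_toReal hLne_top hLne_bot
      have hlc : l < c := by
        rw [← hl_eq] at hc1; exact_mod_cast hc1
      have := hEf_le_Eg.trans (hEg_le (c - l) (by linarith))
      rw [← hl_eq, ← EReal.coe_add] at this
      have : E f ≤ (c : EReal) := by
        convert this using 2
        ring
      exact absurd hc2 (not_lt.mpr this)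
  have hEq : E f = L := le_antisymm key hL_le
  rw [hEq]
  exact htd
end

section
/- Let Y be a non-empty set and let Ē be an extended-real-valued map on L̄_b(Y) satisfying (C1) Ē(f) ≤ sup f for bounded real-valued f; (C2) subadditivity on bounded real-valued functions; (C3) positive homogeneity on bounded real-valued functions; and (E10') continuity with respect to non-decreasing sequences of bounded real-valued functions. Then Ē also satisfies (E10): for every non-decreasing sequence {f_n}_{n∈ℕ₀} in L̄_b(Y), lim_{n→∞} Ē(f_n) = Ē(lim_{n→∞} f_n). -/
open Filter Topology

private lemma coe_nat_tendsto_top' : Tendsto (fun m : ℕ => ((m : ℝ) : EReal)) atTop (𝓝 ⊤) := by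
  rw [EReal.tendsto_nhds_top_iff_real]
  intro r
  filter_upwards [eventually_gt_atTop ⌈r⌉₊] with m hm
  exact_mod_cast lt_of_le_of_lt (Nat.le_ceil r) (by exact_mod_cast hm)

section Aux

variable {Y : Type*} [Nonempty Y] (E : (Y → EReal) → EReal)

/-- Monotonicity on gambles from C1, C2. -/
private lemma gamble_mono
    (hC1 : ∀ f : Y → ℝ, IsGamble f →
      E (fun y => (f y : EReal)) ≤ ⨆ y, ((f y : ℝ) : EReal))
    (hC2 : ∀ f g : Y → ℝ, IsGamble f → IsGamble g →
      E (fun y => (f y : EReal) + (g y : EReal)) ≤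
        E (fun y => (f y : EReal)) + E (fun y => (g y : EReal)))
    (p q : Y → ℝ) (hp : IsGamble p) (hq : IsGamble q) (hpq : ∀ y, p y ≤ q y) :
    E (fun y => (p y : EReal)) ≤ E (fun y => (q y : EReal)) := by
  obtain ⟨Bp, hBp⟩ := hp
  obtain ⟨Bq, hBq⟩ := hq
  have hdg : IsGamble (fun y => p y - q y) := by
    refine ⟨Bp + Bq, fun y => ?_⟩
    calc |p y - q y| ≤ |p y| + |q y| := abs_sub _ _
      _ ≤ Bp + Bq := add_le_add (hBp y) (hBq y)
  have h1 : E (fun y => (q y : EReal) + ((p y - q y : ℝ) : EReal)) ≤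
      E (fun y => (q y : EReal)) + E (fun y => ((p y - q y : ℝ) : EReal)) :=
    hC2 q (fun y => p y - q y) ⟨Bq, hBq⟩ hdg
  have heq : (fun y => (q y : EReal) + ((p y - q y : ℝ) : EReal)) =
      fun y => (p y : EReal) := by
    funext y
    rw [← EReal.coe_add]
    norm_num
  rw [heq] at h1
  have h2 : E (fun y => ((p y - q y : ℝ) : EReal)) ≤ 0 := by
    refine le_trans (hC1 _ hdg) (iSup_le fun y => ?_)
    exact_mod_cast sub_nonpos.2 (hpq y)
  calc E (fun y => (p y : EReal)) ≤
      E (fun y => (q y : EReal)) + E (fun y => ((p y - q y : ℝ) : EReal)) := h1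
    _ ≤ E (fun y => (q y : EReal)) + 0 := add_le_add_right h2 _
    _ = E (fun y => (q y : EReal)) := add_zero _

/-- Truncation of a bounded-below extended-real function. -/
private noncomputable def trunc (g : Y → EReal) (m : ℕ) (y : Y) : ℝ := (min (g y) ((m : ℝ) : EReal)).toReal

private lemma trunc_ne_bot {g : Y → EReal} {M : ℝ} (hM : ∀ y, (M : EReal) ≤ g y)
    (m : ℕ) (y : Y) : min (g y) ((m : ℝ) : EReal) ≠ ⊥ := by
  refine ne_of_gt (lt_min ?_ ?_)
  · exact lt_of_lt_of_le (EReal.bot_lt_coe M) (hM y)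
  · exact EReal.bot_lt_coe _

private lemma trunc_ne_top (g : Y → EReal) (m : ℕ) (y : Y) :
    min (g y) ((m : ℝ) : EReal) ≠ ⊤ :=
  ne_of_lt (lt_of_le_of_lt (min_le_right _ _) (EReal.coe_lt_top _))

private lemma coe_trunc {g : Y → EReal} {M : ℝ} (hM : ∀ y, (M : EReal) ≤ g y) (m : ℕ)
    (y : Y) : ((trunc g m y : ℝ) : EReal) = min (g y) ((m : ℝ) : EReal) :=
  EReal.coe_toReal (trunc_ne_top g m y) (trunc_ne_bot hM m y)

private lemma trunc_gamble {g : Y → EReal} {M : ℝ} (hM : ∀ y, (M : EReal) ≤ g y) (m : ℕ) :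
    IsGamble (trunc g m) := by
  refine ⟨|M| + m, fun y => abs_le.2 ⟨?_, ?_⟩⟩
  · have h1 : ((min M m : ℝ) : EReal) ≤ min (g y) ((m : ℝ) : EReal) := by
      rw [EReal.coe_strictMono.monotone.map_min]
      exact min_le_min (hM y) le_rfl
    have := EReal.toReal_le_toReal h1 (EReal.coe_ne_bot _) (trunc_ne_top g m y)
    rw [EReal.toReal_coe] at this
    refine le_trans ?_ this
    have hnm : -|M| ≤ M := neg_abs_le M
    have habs : (0:ℝ) ≤ |M| := abs_nonneg M
    have h0 : (0:ℝ) ≤ m := Nat.cast_nonneg m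
    rcases le_total M (m:ℝ) with h | h
    · rw [min_eq_left h]; linarith
    · rw [min_eq_right h]; linarith
  · have h1 : min (g y) ((m : ℝ) : EReal) ≤ ((m : ℝ) : EReal) := min_le_right _ _
    have := EReal.toReal_le_toReal h1 (trunc_ne_bot hM m y) (EReal.coe_ne_top _)
    rw [EReal.toReal_coe] at this
    have : trunc g m y ≤ (m : ℝ) := this
    have h0 : (0:ℝ) ≤ |M| := abs_nonneg M
    linarith

private lemma trunc_tendsto (g : Y → EReal) {M : ℝ} (hM : ∀ y, (M : EReal) ≤ g y) (y : Y) :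
    Tendsto (fun m : ℕ => ((trunc g m y : ℝ) : EReal)) atTop (𝓝 (g y)) := by
  have : Tendsto (fun m : ℕ => min (g y) ((m : ℝ) : EReal)) atTop (𝓝 (min (g y) ⊤)) :=
    tendsto_const_nhds.min coe_nat_tendsto_top'
  rw [min_eq_left le_top] at this
  exact this.congr fun m => (coe_trunc hM m y).symm

/-- E of truncations converges to E of the function. -/
private lemma E_trunc_tendsto
    (hE10' : ∀ fn : ℕ → Y → ℝ, (∀ n, IsGamble (fn n)) →
      (∀ n y, fn n y ≤ fn (n + 1) y) → ∀ g : Y → EReal,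
      (∀ y, Tendsto (fun n => ((fn n y : ℝ) : EReal)) atTop (𝓝 (g y))) →
      Tendsto (fun n => E (fun y => (fn n y : EReal))) atTop (𝓝 (E g)))
    (g : Y → EReal) {M : ℝ} (hM : ∀ y, (M : EReal) ≤ g y) :
    Tendsto (fun m => E (fun y => ((trunc g m y : ℝ) : EReal))) atTop (𝓝 (E g)) := by
  refine hE10' (trunc g) (fun m => trunc_gamble hM m) (fun m y => ?_) g
    (fun y => trunc_tendsto g hM y)
  have h1 : min (g y) ((m : ℝ) : EReal) ≤ min (g y) (((m + 1 : ℕ) : ℝ) : EReal) := by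
    refine min_le_min le_rfl ?_
    exact_mod_cast Nat.cast_le.2 (Nat.le_succ m)
  exact EReal.toReal_le_toReal h1 (trunc_ne_bot hM m y) (trunc_ne_top g (m+1) y)

end Aux

/-- Corollary 1: C1–C3 together with E10' (continuity on non-decreasing sequences
of gambles) imply E10 (continuity on non-decreasing sequences of bounded-below
extended-real functions). -/
theorem stmt3 {Y : Type*} [Nonempty Y] (E : (Y → EReal) → EReal)
    (hC1 : ∀ f : Y → ℝ, IsGamble f →
      E (fun y => (f y : EReal)) ≤ ⨆ y, ((f y : ℝ) : EReal))
    (hC2 : ∀ f g : Y → ℝ, IsGamble f → IsGamble g →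
      E (fun y => (f y : EReal) + (g y : EReal)) ≤
        E (fun y => (f y : EReal)) + E (fun y => (g y : EReal)))
    (hC3 : ∀ lam : ℝ, 0 < lam → ∀ f : Y → ℝ, IsGamble f →
      E (fun y => (lam : EReal) * (f y : EReal)) = (lam : EReal) * E (fun y => (f y : EReal)))
    (hE10' : ∀ fn : ℕ → Y → ℝ, (∀ n, IsGamble (fn n)) →
      (∀ n y, fn n y ≤ fn (n + 1) y) → ∀ g : Y → EReal,
      (∀ y, Tendsto (fun n => ((fn n y : ℝ) : EReal)) atTop (𝓝 (g y))) →
      Tendsto (fun n => E (fun y => (fn n y : EReal))) atTop (𝓝 (E g))) :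
    ∀ fn : ℕ → Y → EReal, (∀ n, BddBelowF (fn n)) → Monotone fn →
      ∀ f : Y → EReal, (∀ y, Tendsto (fun n => fn n y) atTop (𝓝 (f y))) →
      Tendsto (fun n => E (fn n)) atTop (𝓝 (E f)) := by
  intro fn hbdd hmono f hlim
  -- extended monotonicity of E
  have Emono : ∀ (p q : Y → EReal) (Mp Mq : ℝ), (∀ y, (Mp : EReal) ≤ p y) →
      (∀ y, (Mq : EReal) ≤ q y) → (∀ y, p y ≤ q y) → E p ≤ E q := by
    intro p q Mp Mq hMp hMq hpq
    refine le_of_tendsto_of_tendsto' (E_trunc_tendsto E hE10' p hMp)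
      (E_trunc_tendsto E hE10' q hMq) fun m => ?_
    refine gamble_mono E hC1 hC2 _ _ (trunc_gamble hMp m) (trunc_gamble hMq m) fun y => ?_
    exact EReal.toReal_le_toReal (min_le_min (hpq y) le_rfl) (trunc_ne_bot hMp m y)
      (trunc_ne_top q m y)
  -- pointwise bound fn n ≤ f, and f is bounded below
  have hle : ∀ n y, fn n y ≤ f y := fun n y =>
    Monotone.ge_of_tendsto (fun a b h => hmono h y) (hlim y) n
  obtain ⟨M0, hM0⟩ := hbdd 0
  have hMf : ∀ y, (M0 : EReal) ≤ f y := fun y => le_trans (hM0 y) (hle 0 y)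
  -- E (fn n) ≤ E f and monotonicity of E (fn ·)
  have hup : ∀ n, E (fn n) ≤ E f := fun n => by
    obtain ⟨Mn, hMn⟩ := hbdd n
    exact Emono _ _ Mn M0 hMn hMf (hle n)
  have hEmono : Monotone fun n => E (fn n) := by
    intro a b hab
    obtain ⟨Ma, hMa⟩ := hbdd a
    obtain ⟨Mb, hMb⟩ := hbdd b
    exact Emono _ _ Ma Mb hMa hMb fun y => hmono hab y
  -- diagonal truncation h m = trunc (fn m) m
  set h : ℕ → Y → ℝ := fun m y => trunc (fn m) m y with hh
  have hMm : ∀ m, ∀ y, (((hbdd m).choose : ℝ) : EReal) ≤ fn m y := fun m => (hbdd m).choose_spec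
  have hdiag : Tendsto (fun m => E (fun y => ((h m y : ℝ) : EReal))) atTop (𝓝 (E f)) := by
    refine hE10' h (fun m => trunc_gamble (hMm m) m) (fun m y => ?_) f (fun y => ?_)
    · have h1 : min (fn m y) ((m : ℝ) : EReal) ≤ min (fn (m+1) y) (((m + 1 : ℕ) : ℝ) : EReal) := by
        refine min_le_min (hmono (Nat.le_succ m) y) ?_
        exact_mod_cast Nat.cast_le.2 (Nat.le_succ m)
      exact EReal.toReal_le_toReal h1 (trunc_ne_bot (hMm m) m y) (trunc_ne_top (fn (m+1)) (m+1) y)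
    · have : Tendsto (fun m : ℕ => min (fn m y) ((m : ℝ) : EReal)) atTop (𝓝 (min (f y) ⊤)) :=
        (hlim y).min coe_nat_tendsto_top'
      rw [min_eq_left le_top] at this
      exact this.congr fun m => (coe_trunc (hMm m) m y).symm
  -- E f ≤ ⨆ n, E (fn n)
  have hsup_ge : E f ≤ ⨆ n, E (fn n) := by
    refine le_of_tendsto hdiag (Eventually.of_forall fun m => ?_)
    refine le_trans ?_ (le_iSup (fun n => E (fn n)) m)
    obtain ⟨Mm, hMm'⟩ := hbdd m
    refine Emono _ _ (min Mm 0) Mm ?_ hMm' fun y => ?_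
    · intro y
      rw [coe_trunc (hMm m) m y, EReal.coe_strictMono.monotone.map_min]
      refine le_min (le_trans (min_le_left _ _) (hMm' y)) (le_trans (min_le_right _ _) ?_)
      exact_mod_cast Nat.cast_nonneg m
    · rw [coe_trunc (hMm m) m y]
      exact min_le_left _ _
  have hsup_le : (⨆ n, E (fn n)) ≤ E f := iSup_le hup
  have : (⨆ n, E (fn n)) = E f := le_antisymm hsup_le hsup_ge
  rw [← this]
  exact tendsto_atTop_iSup hEmono
end

section
/- Let Y be a finite non-empty set and let Ē be an upper expectation on L̄_b(Y). Then for every sequence {f_n}_{n∈ℕ} of non-negative functions in L̄_b(Y), one has Ē(∑_{n∈ℕ} f_n) ≤ ∑_{n∈ℕ} Ē(f_n), where the sum of functions is taken pointwise in the extended reals. -/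
open Filter Topology

lemma bdd_of_nonneg {Y : Type*} {f : Y → EReal} (h : ∀ y, 0 ≤ f y) : BddBelowF f :=
  ⟨0, fun y => by simpa using h y⟩

lemma ereal_tsum_eq_iSup (g : ℕ → EReal) (hg : ∀ n, 0 ≤ g n) :
    ∑' n, g n = ⨆ N, ∑ n ∈ Finset.range N, g n := by
  have hsum : HasSum g (⨆ s : Finset ℕ, ∑ i ∈ s, g i) :=
    hasSum_of_isLUB_of_nonneg _ hg (isLUB_iSup)
  rw [hsum.tsum_eq]
  apply le_antisymm
  · refine iSup_le fun s => le_iSup_of_le (s.sup id + 1) ?_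
    refine Finset.sum_le_sum_of_subset_of_nonneg ?_ fun i _ _ => hg i
    intro i hi
    exact Finset.mem_range.2 (Nat.lt_succ_of_le (Finset.le_sup (f := id) hi))
  · exact iSup_le fun N => le_iSup_of_le (Finset.range N) le_rfl

lemma ereal_le_of_forall_add {a b : EReal} (h : ∀ ε : ℝ, 0 < ε → a ≤ b + (ε : EReal)) :
    a ≤ b := by
  by_contra hab
  push_neg at hab
  obtain ⟨c, hbc, hca⟩ := EReal.exists_between_coe_real hab
  obtain ⟨d, hbd, hdc⟩ := EReal.exists_between_coe_real hbc
  have hcd : (0:ℝ) < c - d := sub_pos.2 (EReal.coe_lt_coe_iff.1 hdc)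
  have h1 : a ≤ (d : EReal) + ((c - d : ℝ) : EReal) :=
    (h (c - d) hcd).trans (add_le_add_left hbd.le _)
  rw [← EReal.coe_add] at h1
  have : (d + (c - d) : ℝ) = c := by ring
  rw [this] at h1
  exact absurd (h1.trans_lt hca) (lt_irrefl a)

/-- Corollary 2: countable subadditivity of an upper expectation on a finite
non-empty set, for sequences of non-negative bounded-below functions. -/
theorem stmt4 {Y : Type*} [Fintype Y] [Nonempty Y] (E : (Y → EReal) → EReal)
    (hE : IsUpperExpectation E)
    (fn : ℕ → Y → EReal) (hnn : ∀ n y, 0 ≤ fn n y) :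
    E (fun y => ∑' n, fn n y) ≤ ∑' n, E (fn n) := by
  classical
  set S : ℕ → Y → EReal := fun N y => ∑ n ∈ Finset.range N, fn n y with hSdef
  have hSnn : ∀ N y, 0 ≤ S N y := fun N y => Finset.sum_nonneg fun n _ => hnn n y
  have hSmono : ∀ {M N : ℕ}, M ≤ N → ∀ y, S M y ≤ S N y := by
    intro M N h y
    exact Finset.sum_le_sum_of_subset_of_nonneg (Finset.range_subset_range.2 h)
      fun i _ _ => hnn i y
  have hE0 : E (fun _ => (0 : EReal)) = 0 := by simpa using hE.const 0
  have hEnn : ∀ n, 0 ≤ E (fn n) := fun n => by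
    rw [← hE0]
    exact hE.mono _ _ ⟨0, fun y => by simp⟩ (bdd_of_nonneg (hnn n)) (fun y => hnn n y)
  have hf : (fun y => ∑' n, fn n y) = fun y => ⨆ N, S N y :=
    funext fun y => ereal_tsum_eq_iSup _ fun n => hnn n y
  have hRHS : ∑' n, E (fn n) = ⨆ N, ∑ n ∈ Finset.range N, E (fn n) :=
    ereal_tsum_eq_iSup _ hEnn
  -- finite subadditivity
  have hfin : ∀ N, E (S N) ≤ ∑ n ∈ Finset.range N, E (fn n) := by
    intro N
    induction N with
    | zero => simp only [hSdef, Finset.range_zero, Finset.sum_empty]; exact hE0.le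
    | succ N ih =>
      have heq : S (N + 1) = fun y => S N y + fn N y := by
        funext y; simp [hSdef, Finset.sum_range_succ]
      rw [heq, Finset.sum_range_succ]
      exact (hE.subadd _ _ (bdd_of_nonneg (hSnn N)) (bdd_of_nonneg (hnn N))).trans
        (add_le_add_left ih _)
  have hpart : ∀ N, E (S N) ≤ ∑' n, E (fn n) := fun N =>
    (hfin N).trans (hRHS ▸ le_iSup (fun N => ∑ n ∈ Finset.range N, E (fn n)) N)
  -- indicator of the set where the sup is infinite
  set χ : Y → EReal := fun y => if (⨆ N, S N y) = ⊤ then 1 else 0 with hχdef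
  have hχnn : ∀ y, 0 ≤ χ y := fun y => by
    simp only [hχdef]; split <;> simp
  rw [hf]
  rcases le_or_gt (E χ) 0 with h0 | h1
  · -- E χ = 0
    have hEχ : E χ = 0 := le_antisymm h0 (by
      rw [← hE0]
      exact hE.mono _ _ ⟨0, fun y => by simp⟩ (bdd_of_nonneg hχnn) hχnn)
    have hEtopχ : E (fun y => (⊤ : EReal) * χ y) = 0 := by
      rw [hE.homog ⊤ EReal.zero_lt_top χ (bdd_of_nonneg hχnn) hχnn, hEχ, mul_zero]
    apply ereal_le_of_forall_add
    intro ε hε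
    -- choose N per point
    have hN : ∀ y, ∃ N, (⨆ M, S M y) ≤ S N y + (((ε : EReal)) + (⊤ : EReal) * χ y) := by
      intro y
      by_cases hy : (⨆ M, S M y) = ⊤
      · refine ⟨0, ?_⟩
        have hχ1 : χ y = 1 := by simp [hχdef, hy]
        rw [hχ1, mul_one]
        have hne : ((ε : EReal)) + (⊤ : EReal) = ⊤ :=
          EReal.add_top_of_ne_bot (by simp)
        rw [hne, EReal.add_top_of_ne_bot ((EReal.bot_lt_zero.trans_le (hSnn 0 y)).ne')]
        exact le_top
      · have hχ0 : χ y = 0 := by simp [hχdef, hy]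
        have ha0 : 0 ≤ ⨆ M, S M y := le_trans (hSnn 0 y) (le_iSup (fun M => S M y) 0)
        obtain ⟨r, hr⟩ : ∃ r : ℝ, (⨆ M, S M y) = (r : EReal) :=
          ⟨(⨆ M, S M y).toReal,
            (EReal.coe_toReal hy (EReal.bot_lt_zero.trans_le ha0).ne').symm⟩
        have hlt : ((r - ε : ℝ) : EReal) < ⨆ M, S M y := by
          rw [hr]
          exact_mod_cast sub_lt_self r hε
        obtain ⟨N, hN⟩ := lt_iSup_iff.1 hlt
        refine ⟨N, ?_⟩
        rw [hr, hχ0, mul_zero, add_zero]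
        calc ((r : ℝ) : EReal) = ((r - ε : ℝ) : EReal) + (ε : EReal) := by
              rw [← EReal.coe_add]; norm_num
          _ ≤ S N y + (ε : EReal) := add_le_add_left hN.le _
    choose Nn hNn using hN
    set N := Finset.univ.sup Nn with hNdef
    have hb : ∀ y, (⨆ M, S M y) ≤ S N y + (((ε : EReal)) + (⊤ : EReal) * χ y) := by
      intro y
      exact (hNn y).trans (add_le_add_left
        (hSmono (Finset.le_sup (Finset.mem_univ y)) y) _)
    have haux2 : ∀ y, 0 ≤ (⊤ : EReal) * χ y := by
      intro y
      simp only [hχdef]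
      split <;> simp
    have haux : ∀ y, 0 ≤ ((ε : EReal)) + (⊤ : EReal) * χ y := fun y =>
      add_nonneg (by exact_mod_cast hε.le) (haux2 y)
    calc E (fun y => ⨆ M, S M y)
        ≤ E (fun y => S N y + (((ε : EReal)) + (⊤ : EReal) * χ y)) :=
          hE.mono _ _ (bdd_of_nonneg fun y => le_trans (hSnn 0 y) (le_iSup (fun M => S M y) 0))
            (bdd_of_nonneg fun y => le_add_of_nonneg_of_le (hSnn N y) (haux y)) hb
      _ ≤ E (S N) + E (fun y => ((ε : EReal)) + (⊤ : EReal) * χ y) :=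
          hE.subadd _ _ (bdd_of_nonneg (hSnn N)) (bdd_of_nonneg haux)
      _ ≤ E (S N) + (E (fun _ => (ε : EReal)) + E (fun y => (⊤ : EReal) * χ y)) := by
          refine add_le_add_right ?_ _
          exact hE.subadd _ _ ⟨ε, fun y => le_refl _⟩ (bdd_of_nonneg haux2)
      _ = E (S N) + (ε : EReal) := by rw [hE.const, hEtopχ, add_zero]
      _ ≤ (∑' n, E (fn n)) + (ε : EReal) := add_le_add_left (hpart N) _
  · -- E χ > 0 : RHS is ⊤
    have hM : ∀ M : ℝ, 0 < M → ((M : EReal)) * E χ ≤ ∑' n, E (fn n) := by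
      intro M hM
      have hN : ∀ y, ∃ N, (M : EReal) * χ y ≤ S N y := by
        intro y
        by_cases hy : (⨆ Mm, S Mm y) = ⊤
        · have hχ1 : χ y = 1 := by simp [hχdef, hy]
          have : ((M : EReal)) < ⨆ Mm, S Mm y := by rw [hy]; exact EReal.coe_lt_top M
          obtain ⟨N, hN⟩ := lt_iSup_iff.1 this
          exact ⟨N, by rw [hχ1, mul_one]; exact hN.le⟩
        · have hχ0 : χ y = 0 := by simp [hχdef, hy]
          exact ⟨0, by rw [hχ0, mul_zero]; exact hSnn 0 y⟩
      choose Nn hNn using hN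
      set N := Finset.univ.sup Nn with hNdef
      have hb : ∀ y, (M : EReal) * χ y ≤ S N y := fun y =>
        (hNn y).trans (hSmono (Finset.le_sup (Finset.mem_univ y)) y)
      calc ((M : EReal)) * E χ
          = E (fun y => (M : EReal) * χ y) :=
            (hE.homog M (EReal.coe_pos.2 hM) χ (bdd_of_nonneg hχnn) hχnn).symm
        _ ≤ E (S N) := hE.mono _ _
            (bdd_of_nonneg fun y => mul_nonneg (EReal.coe_pos.2 hM).le (hχnn y))
            (bdd_of_nonneg (hSnn N)) hb
        _ ≤ ∑' n, E (fn n) := hpart N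
    have htop : ∑' n, E (fn n) = ⊤ := by
      rcases eq_top_or_lt_top (E χ) with hχtop | hχlt
      · have := hM 1 one_pos
        rw [hχtop] at this
        simpa using this
      · -- E χ is a positive real
        have hne : E χ ≠ ⊥ := (EReal.bot_lt_zero.trans h1).ne'
        lift E χ to ℝ using ⟨hχlt.ne, hne⟩ with c hc
        have hcpos : 0 < c := EReal.coe_pos.1 (hc ▸ h1)
        rw [EReal.eq_top_iff_forall_lt]
        intro K
        have hMpos : 0 < (|K| + 1) / c := div_pos (by positivity) hcpos
        have := hM _ hMpos
        rw [← EReal.coe_mul] at this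
        refine lt_of_lt_of_le ?_ this
        rw [EReal.coe_lt_coe_iff]
        calc K ≤ |K| := le_abs_self K
          _ < |K| + 1 := by linarith
          _ = (|K| + 1) / c * c := by field_simp
    rw [htop]
    exact le_top
end

section
/- Let X be a finite non-empty set, Ω = X^ℕ, and let f : Ω → ℝ̄ be any extended-real-valued function. Then f is bounded below and is the pointwise limit of some sequence of finitary extended-real variables if and only if f is the pointwise limit of a sequence {f_n}_{n∈ℕ₀} where each f_n is an n-measurable gamble, the sequence is uniformly bounded below, and f_n ≤ sup f for all n ∈ ℕ₀. If moreover inf f is real, then the sequence can be chosen so that additionally inf f ≤ f_n for all n ∈ ℕ₀. -/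
open Filter Topology

/-- The initial segment `ω^n = (ω_1, …, ω_n)` of a path `ω ∈ X^ℕ`. -/
def seg {X : Type*} (ω : ℕ → X) (n : ℕ) : List X :=
  List.ofFn (fun i : Fin n => ω i)

/-- The cylinder event `Γ(s)` of all paths going through the situation `s`. -/
def cyl {X : Type*} (s : List X) : Set (ℕ → X) :=
  {ω | seg ω s.length = s}

/-- A global variable is `n`-measurable if it only depends on the first `n` states. -/
def NMeas {X α : Type*} (n : ℕ) (f : (ℕ → X) → α) : Prop :=
  ∀ ω ω' : ℕ → X, seg ω n = seg ω' n → f ω = f ω'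

/-- A supermartingale for an imprecise probability tree `Q`: a bounded-below
extended-real process `M` on situations such that `Q_s(M(s·)) ≤ M(s)` everywhere. -/
def IsSupermartingale {X : Type*} (Q : List X → (X → EReal) → EReal)
    (M : List X → EReal) : Prop :=
  (∃ B : ℝ, ∀ s, (B : EReal) ≤ M s) ∧ ∀ s, Q s (fun x => M (s ++ [x])) ≤ M s

/-- The game-theoretic upper expectation `Ē_V(f | s)`. -/
noncomputable def gUE {X : Type*} (Q : List X → (X → EReal) → EReal)
    (f : (ℕ → X) → EReal) (s : List X) : EReal :=
  sInf { y | ∃ M : List X → EReal, IsSupermartingale Q M ∧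
    (∀ ω ∈ cyl s, f ω ≤ Filter.liminf (fun n => M (seg ω n)) Filter.atTop) ∧ M s = y }

/-!
Clamping the `k`-th finitary approximant `g k` between `M ≤ inf f` and `min (sup f) k` yields
real, bounded, finitary variables that still converge to `f`, because `M ≤ f ≤ sup f` and
`min (sup f) k → sup f`. Slowing this sequence down, so that its `n`-th term depends only on the
first `n` states (and is the constant `M` before that is possible), gives `n`-measurable gambles.
-/

section Approximation

variable {X : Type*}

lemma NMeas.mono {α : Type*} {m n : ℕ} (hmn : m ≤ n) {f : (ℕ → X) → α}
    (hf : NMeas m f) : NMeas n f := by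
  intro ω ω' h
  apply hf
  have h' : ∀ i : Fin n, ω i = ω' i := fun i => congrFun (List.ofFn_inj.mp h) i
  exact List.ofFn_inj.mpr (funext fun i => h' ⟨i, i.2.trans_le hmn⟩)

lemma nMeas_const {α : Type*} (n : ℕ) (a : α) : NMeas n (fun _ : ℕ → X => a) :=
  fun _ _ _ => rfl

lemma exists_tendsto_atTop_eventually_nMeas {α : Type*} (g : ℕ → (ℕ → X) → α)
    (hg : ∀ k, ∃ m, NMeas m (g k)) :
    ∃ φ : ℕ → ℕ, Tendsto φ atTop atTop ∧ ∀ᶠ n in atTop, NMeas n (g (φ n)) := by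
  choose m hm using hg
  refine ⟨fun n => Nat.findGreatest (fun k => m k ≤ n) n, ?_, ?_⟩
  · refine tendsto_atTop.2 fun K => eventually_atTop.2 ⟨max K (m K), fun n hn => ?_⟩
    exact Nat.le_findGreatest (le_of_max_le_left hn) (le_of_max_le_right hn)
  · filter_upwards [eventually_ge_atTop (m 0)] with n hn
    exact (hm _).mono (Nat.findGreatest_spec (P := fun k => m k ≤ n) n.zero_le hn)

lemma coe_toReal_max_min {b : EReal} (hb : b ≠ ⊤) (x : EReal) (a : ℝ) :
    ((max (min x b) a).toReal : EReal) = max (min x b) a :=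
  EReal.coe_toReal (max_lt (min_le_right x b |>.trans_lt hb.lt_top) (EReal.coe_lt_top a)).ne
    (ne_bot_of_le_ne_bot (EReal.coe_ne_bot a) (le_max_right _ _))

variable (f : (ℕ → X) → EReal) (M : ℝ) (hM : ∀ ω, (M : EReal) ≤ f ω)
  (g : ℕ → (ℕ → X) → EReal) (hgm : ∀ n, ∃ m, NMeas m (g n))
  (hgt : ∀ ω, Tendsto (fun n => g n ω) atTop (𝓝 (f ω)))
include hM hgm hgt

lemma exists_finitary_gamble_tendsto :
    ∃ h : ℕ → (ℕ → X) → ℝ,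
      (∀ k, ∃ m, NMeas m (h k)) ∧
      (∀ k, ∃ B : ℝ, ∀ ω, |h k ω| ≤ B) ∧
      (∀ k ω, M ≤ h k ω) ∧
      (∀ k ω, ((h k ω : ℝ) : EReal) ≤ ⨆ ω', f ω') ∧
      (∀ ω, Tendsto (fun k => ((h k ω : ℝ) : EReal)) atTop (𝓝 (f ω))) := by
  set S := ⨆ ω', f ω'
  set b : ℕ → EReal := fun k => min S (k : ℝ)
  have hcoe : ∀ k ω, (((max (min (g k ω) (b k)) M).toReal : ℝ) : EReal) =
      max (min (g k ω) (b k)) M := fun k ω =>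
    coe_toReal_max_min (ne_top_of_le_ne_top (EReal.coe_ne_top _) (min_le_right _ _)) _ _
  refine ⟨fun k ω => (max (min (g k ω) (b k)) M).toReal, fun k => ?_,
    fun k => ⟨|M| + k, fun ω => ?_⟩, fun k ω => ?_, fun k ω => ?_, fun ω => ?_⟩
  · obtain ⟨m, hm⟩ := hgm k
    exact ⟨m, fun ω ω' h => by simp only [hm ω ω' h]⟩
  · have hlo : M ≤ (max (min (g k ω) (b k)) M).toReal := by
      exact_mod_cast (hcoe k ω).symm ▸ le_max_right _ _
    have hhi : (max (min (g k ω) (b k)) M).toReal ≤ |M| + k := by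
      have : max (min (g k ω) (b k)) M ≤ ((|M| + k : ℝ) : EReal) := by
        refine max_le ((min_le_right _ _).trans ((min_le_right _ _).trans ?_)) ?_ <;>
          exact EReal.coe_le_coe_iff.2
            (by linarith [abs_nonneg M, le_abs_self M, k.cast_nonneg (α := ℝ)])
      exact_mod_cast (hcoe k ω).symm ▸ this
    exact abs_le.2 ⟨by linarith [neg_abs_le M, k.cast_nonneg (α := ℝ)], hhi⟩
  · exact_mod_cast (hcoe k ω).symm ▸ le_max_right _ _
  · rw [hcoe]
    exact max_le ((min_le_right _ _).trans (min_le_left _ _)) ((hM ω).trans (le_iSup f ω))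
  · simp only [hcoe]
    have hbS : Tendsto b atTop (𝓝 S) := by
      have := tendsto_const_nhds (x := S) |>.min
        (EReal.tendsto_coe_nhds_top_iff.2 tendsto_natCast_atTop_atTop)
      rwa [min_top_right] at this
    have hlim : max (min (f ω) S) M = f ω := by
      rw [min_eq_left (le_iSup f ω), max_eq_left (hM ω)]
    have := ((hgt ω).min hbS).max (tendsto_const_nhds (x := (M : EReal)))
    rwa [hlim] at this

lemma exists_nMeas_gamble_tendsto :
    ∃ fn : ℕ → (ℕ → X) → ℝ,
      (∀ n, NMeas n (fn n)) ∧
      (∀ n, ∃ B : ℝ, ∀ ω, |fn n ω| ≤ B) ∧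
      (∀ n ω, M ≤ fn n ω) ∧
      (∀ n ω, ((fn n ω : ℝ) : EReal) ≤ ⨆ ω', f ω') ∧
      (∀ ω, Tendsto (fun n => ((fn n ω : ℝ) : EReal)) atTop (𝓝 (f ω))) := by
  classical
  obtain ⟨h, hm, hB, hMh, hS, ht⟩ := exists_finitary_gamble_tendsto f M hM g hgm hgt
  obtain ⟨φ, hφ, hφm⟩ := exists_tendsto_atTop_eventually_nMeas h hm
  refine ⟨fun n => if NMeas n (h (φ n)) then h (φ n) else fun _ => M, fun n => ?_, fun n => ?_,
    fun n ω => ?_, fun n ω => ?_, fun ω => ?_⟩ <;> dsimp only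
  · split_ifs with hn
    exacts [hn, nMeas_const n M]
  · split_ifs
    exacts [hB (φ n), ⟨|M|, fun _ => le_rfl⟩]
  · split_ifs
    exacts [hMh _ ω, le_rfl]
  · split_ifs
    exacts [hS _ ω, (hM ω).trans (le_iSup f ω)]
  · refine ((ht ω).comp hφ).congr' ?_
    filter_upwards [hφm] with n hn
    simp only [Function.comp_apply, hn, if_true]

end Approximation

theorem stmt5_general {X : Type*} (f : (ℕ → X) → EReal) :
    ((BddBelowF f ∧ ∃ g : ℕ → (ℕ → X) → EReal,
        (∀ n, ∃ m, NMeas m (g n)) ∧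
        (∀ ω, Tendsto (fun n => g n ω) atTop (𝓝 (f ω)))) ↔
      (∃ fn : ℕ → (ℕ → X) → ℝ,
        (∀ n, NMeas n (fn n)) ∧
        (∀ n, ∃ B : ℝ, ∀ ω, |fn n ω| ≤ B) ∧
        (∃ M : ℝ, ∀ n ω, M ≤ fn n ω) ∧
        (∀ n ω, ((fn n ω : ℝ) : EReal) ≤ ⨆ ω', f ω') ∧
        (∀ ω, Tendsto (fun n => ((fn n ω : ℝ) : EReal)) atTop (𝓝 (f ω))))) ∧
    ((BddBelowF f ∧ ∃ g : ℕ → (ℕ → X) → EReal,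
        (∀ n, ∃ m, NMeas m (g n)) ∧
        (∀ ω, Tendsto (fun n => g n ω) atTop (𝓝 (f ω)))) →
      (∃ r : ℝ, (⨅ ω, f ω) = (r : EReal)) →
      (∃ fn : ℕ → (ℕ → X) → ℝ,
        (∀ n, NMeas n (fn n)) ∧
        (∀ n, ∃ B : ℝ, ∀ ω, |fn n ω| ≤ B) ∧
        (∀ n ω, (⨅ ω', f ω') ≤ ((fn n ω : ℝ) : EReal)) ∧
        (∀ n ω, ((fn n ω : ℝ) : EReal) ≤ ⨆ ω', f ω') ∧
        (∀ ω, Tendsto (fun n => ((fn n ω : ℝ) : EReal)) atTop (𝓝 (f ω))))) := by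
  refine ⟨⟨?_, ?_⟩, ?_⟩
  · rintro ⟨⟨M, hM⟩, g, hgm, hgt⟩
    obtain ⟨fn, hm, hB, hMf, hS, ht⟩ := exists_nMeas_gamble_tendsto f M hM g hgm hgt
    exact ⟨fn, hm, hB, ⟨M, hMf⟩, hS, ht⟩
  · rintro ⟨fn, hm, -, ⟨M, hMf⟩, -, ht⟩
    refine ⟨⟨M, fun ω => ge_of_tendsto' (ht ω) fun n => by exact_mod_cast hMf n ω⟩,
      fun n ω => fn n ω, fun n => ⟨n, fun ω ω' h => by simp only [hm n ω ω' h]⟩, ht⟩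
  · rintro ⟨-, g, hgm, hgt⟩ ⟨r, hr⟩
    have hrf : ∀ ω, (r : EReal) ≤ f ω := fun ω => hr ▸ iInf_le f ω
    obtain ⟨fn, hm, hB, hrfn, hS, ht⟩ := exists_nMeas_gamble_tendsto f r hrf g hgm hgt
    exact ⟨fn, hm, hB, fun n ω => hr ▸ EReal.coe_le_coe_iff.2 (hrfn n ω), hS, ht⟩

/-- Lemma 4: a bounded-below extended-real global variable is a pointwise limit of
finitary variables if and only if it is the pointwise limit of a uniformly
bounded-below sequence of `n`-measurable gambles dominated by `sup f`; and if
`inf f` is real the sequence can moreover be chosen above `inf f`. -/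
theorem stmt5 {X : Type*} [Fintype X] [Nonempty X] (f : (ℕ → X) → EReal) :
    ((BddBelowF f ∧ ∃ g : ℕ → (ℕ → X) → EReal,
        (∀ n, ∃ m, NMeas m (g n)) ∧
        (∀ ω, Tendsto (fun n => g n ω) atTop (𝓝 (f ω)))) ↔
      (∃ fn : ℕ → (ℕ → X) → ℝ,
        (∀ n, NMeas n (fn n)) ∧
        (∀ n, ∃ B : ℝ, ∀ ω, |fn n ω| ≤ B) ∧
        (∃ M : ℝ, ∀ n ω, M ≤ fn n ω) ∧
        (∀ n ω, ((fn n ω : ℝ) : EReal) ≤ ⨆ ω', f ω') ∧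
        (∀ ω, Tendsto (fun n => ((fn n ω : ℝ) : EReal)) atTop (𝓝 (f ω))))) ∧
    ((BddBelowF f ∧ ∃ g : ℕ → (ℕ → X) → EReal,
        (∀ n, ∃ m, NMeas m (g n)) ∧
        (∀ ω, Tendsto (fun n => g n ω) atTop (𝓝 (f ω)))) →
      (∃ r : ℝ, (⨅ ω, f ω) = (r : EReal)) →
      (∃ fn : ℕ → (ℕ → X) → ℝ,
        (∀ n, NMeas n (fn n)) ∧
        (∀ n, ∃ B : ℝ, ∀ ω, |fn n ω| ≤ B) ∧
        (∀ n ω, (⨅ ω', f ω') ≤ ((fn n ω : ℝ) : EReal)) ∧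
        (∀ n ω, ((fn n ω : ℝ) : EReal) ≤ ⨆ ω', f ω') ∧
        (∀ ω, Tendsto (fun n => ((fn n ω : ℝ) : EReal)) atTop (𝓝 (f ω))))) :=
  stmt5_general f
end

section
/- Let X be a finite non-empty set with an imprecise probability tree (Q_s)_{s∈X*}, let M be a supermartingale and s ∈ X* a situation. Then M(s) ≥ inf_{ω∈Γ(s)} limsup_{n→∞} M(ω^n) ≥ inf_{ω∈Γ(s)} liminf_{n→∞} M(ω^n). -/
/-!
Since `Q_u` dominates the constants below `M(u·)` and `X` is finite, every situation `u` has a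
child `u x` with `M(u x) ≤ Q_u(M(u·)) ≤ M(u)`. Always moving to such a child, starting from `s`,
produces a path through `s` along which `M` never exceeds `M(s)`, so its limsup is at most `M(s)`.
-/

open Filter Topology

theorem IsUpperExpectation.iInf_le {Y : Type*} {E : (Y → EReal) → EReal}
    (hE : IsUpperExpectation E) {f : Y → EReal} (hf : BddBelowF f) : ⨅ y, f y ≤ E f := by
  refine EReal.ge_of_forall_gt_iff_ge.1 fun z hz => ?_
  calc (z : EReal) = E (fun _ => (z : EReal)) := (hE.const z).symm
    _ ≤ E f := hE.mono _ _ ⟨z, fun _ => le_rfl⟩ hf fun y => hz.le.trans (_root_.iInf_le f y)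

theorem IsSupermartingale.exists_child_le {X : Type*} [Finite X] [Nonempty X]
    {Q : List X → (X → EReal) → EReal} (hQ : ∀ s, IsUpperExpectation (Q s))
    {M : List X → EReal} (hM : IsSupermartingale Q M) (u : List X) :
    ∃ x, M (u ++ [x]) ≤ M u := by
  obtain ⟨⟨B, hB⟩, hsuper⟩ := hM
  obtain ⟨x, hx⟩ := Finite.exists_min fun x => M (u ++ [x])
  refine ⟨x, ?_⟩
  calc M (u ++ [x]) ≤ ⨅ y, M (u ++ [y]) := le_iInf hx
    _ ≤ Q u (fun y => M (u ++ [y])) := (hQ u).iInf_le ⟨B, fun _ => hB _⟩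
    _ ≤ M u := hsuper u

section FollowPath

variable {X : Type*}

theorem seg_succ (ω : ℕ → X) (n : ℕ) : seg ω (n + 1) = seg ω n ++ [ω n] := by
  simp only [seg, List.ofFn_succ', List.concat_eq_append, Fin.val_castSucc, Fin.val_last]

def followPath (g : List X → X) (s : List X) : ℕ → X
  | n => if h : n < s.length then s[n] else g (List.ofFn fun i : Fin n => followPath g s i)
decreasing_by exact i.isLt

theorem followPath_of_lt (g : List X → X) (s : List X) {n : ℕ} (hn : n < s.length) :
    followPath g s n = s[n] := by
  rw [followPath, dif_pos hn]

theorem followPath_of_le (g : List X → X) (s : List X) {n : ℕ} (hn : s.length ≤ n) :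
    followPath g s n = g (seg (followPath g s) n) := by
  rw [followPath, dif_neg (not_lt.2 hn)]
  rfl

theorem followPath_mem_cyl (g : List X → X) (s : List X) : followPath g s ∈ cyl s :=
  List.ext_getElem (by simp [seg]) fun n hn _ => by
    simp only [seg, List.getElem_ofFn]
    exact followPath_of_lt g s _

theorem exists_mem_cyl_forall_le {α : Type*} [Preorder α] (f : List X → α)
    (hf : ∀ u, ∃ x, f (u ++ [x]) ≤ f u) (s : List X) :
    ∃ ω ∈ cyl s, ∀ n ≥ s.length, f (seg ω n) ≤ f s := by
  choose g hg using hf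
  refine ⟨followPath g s, followPath_mem_cyl g s, fun n hn => ?_⟩
  induction n, hn using Nat.le_induction with
  | base => rw [followPath_mem_cyl g s]
  | succ n hn ih => rw [seg_succ, followPath_of_le g s hn]; exact (hg _).trans ih

end FollowPath

/-- Lemma 7: a supermartingale dominates the infimum over the paths through `s`
of its limsup, which in turn dominates the infimum of its liminf. -/
theorem stmt8 {X : Type*} [Fintype X] [Nonempty X]
    (Q : List X → (X → EReal) → EReal) (hQ : ∀ s, IsUpperExpectation (Q s))
    (M : List X → EReal) (hM : IsSupermartingale Q M) (s : List X) :
    (⨅ ω ∈ cyl s, Filter.limsup (fun n => M (seg ω n)) atTop) ≤ M s ∧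
    (⨅ ω ∈ cyl s, Filter.liminf (fun n => M (seg ω n)) atTop) ≤
      ⨅ ω ∈ cyl s, Filter.limsup (fun n => M (seg ω n)) atTop := by
  refine ⟨?_, iInf₂_mono fun ω _ => liminf_le_limsup⟩
  obtain ⟨ω, hω, hle⟩ := exists_mem_cyl_forall_le M (hM.exists_child_le hQ) s
  exact (iInf₂_le ω hω).trans <| limsup_le_of_le (by isBoundedDefault) <|
    eventually_atTop.2 ⟨s.length, hle⟩
end

section
/- Let X be a finite non-empty set with an imprecise probability tree, and let Ē_V be the associated game-theoretic upper expectation. Then for all f, g : Ω → ℝ̄, all real λ ≥ 0, all real μ, and all situations s ∈ X*: (V1) Ē_V(f|s) ≤ sup_{ω∈Γ(s)} f(ω); (V2) Ē_V(f+g|s) ≤ Ē_V(f|s) + Ē_V(g|s); (V3) Ē_V(λf|s) = λ Ē_V(f|s); (V4) if f(ω) ≤ g(ω) for all ω ∈ Γ(s) then Ē_V(f|s) ≤ Ē_V(g|s); (V5) inf_{ω∈Γ(s)} f(ω) ≤ Ḙ_V(f|s) ≤ Ē_V(f|s) ≤ sup_{ω∈Γ(s)} f(ω), where Ḙ_V(f|s)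 := −Ē_V(−f|s); (V6) Ē_V(f+μ|s) = Ē_V(f|s) + μ. -/
open Filter Topology

/-- Extended-real addition with the convention `+∞ − ∞ = −∞ + ∞ = +∞`. -/
noncomputable def eadd (a b : EReal) : EReal := if a = ⊤ ∨ b = ⊤ then ⊤ else a + b

set_option linter.unusedSectionVars false

namespace GUEAux

lemma seg_length {X : Type*} (ω : ℕ → X) (n : ℕ) : (seg ω n).length = n := by
  simp [seg]

lemma seg_getElem {X : Type*} (ω : ℕ → X) (n i : ℕ) (h : i < (seg ω n).length) :
    (seg ω n)[i] = ω i := by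
  simp [seg]

lemma seg_succ {X : Type*} (ω : ℕ → X) (n : ℕ) : seg ω (n+1) = seg ω n ++ [ω n] := by
  rw [seg, List.ofFn_succ']
  simp [seg, List.concat_eq_append]

variable {X : Type*} [Fintype X] [Nonempty X]

lemma exists_pick (M : List X → EReal) (t : List X) :
    ∃ x : X, ∀ y : X, M (t ++ [x]) ≤ M (t ++ [y]) := by
  obtain ⟨b, -, hb⟩ := Finset.exists_min_image (Finset.univ : Finset X)
    (fun x => M (t ++ [x])) ⟨Classical.arbitrary X, Finset.mem_univ _⟩
  exact ⟨b, fun y => hb y (Finset.mem_univ y)⟩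

noncomputable def pick (M : List X → EReal) (t : List X) : X := (exists_pick M t).choose

lemma pick_spec (M : List X → EReal) (t : List X) (y : X) :
    M (t ++ [pick M t]) ≤ M (t ++ [y]) := (exists_pick M t).choose_spec y

noncomputable def chain (M : List X → EReal) (s : List X) : ℕ → List X
  | 0 => s
  | n+1 => chain M s n ++ [pick M (chain M s n)]

lemma chain_length (M : List X → EReal) (s : List X) (n : ℕ) :
    (chain M s n).length = s.length + n := by
  induction n with
  | zero => rfl
  | succ n ih => simp [chain, ih]; omega

lemma chain_prefix (M : List X → EReal) (s : List X) {m n : ℕ} (h : m ≤ n) :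
    chain M s m <+: chain M s n := by
  induction n with
  | zero => simp_all
  | succ n ih =>
    rcases Nat.lt_or_ge m (n+1) with h' | h'
    · exact (ih (by omega)).trans ⟨[pick M (chain M s n)], rfl⟩
    · have : m = n + 1 := by omega
      subst this; rfl

noncomputable def pathOf (M : List X → EReal) (s : List X) (i : ℕ) : X :=
  (chain M s (i+1)).getD i (Classical.arbitrary X)

lemma pathOf_eq (M : List X → EReal) (s : List X) {n i : ℕ}
    (h : i < (chain M s n).length) : pathOf M s i = (chain M s n)[i] := by
  rcases Nat.le_total (i+1) n with h' | h'
  · have hp := chain_prefix M s h'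
    have hi : i < (chain M s (i+1)).length := by rw [chain_length]; omega
    rw [pathOf, List.getD_eq_getElem _ _ hi, hp.getElem hi]
  · have hp := chain_prefix M s h'
    have hi : i < (chain M s (i+1)).length := by rw [chain_length]; omega
    rw [pathOf, List.getD_eq_getElem _ _ hi, hp.getElem h]

lemma seg_pathOf_eq_chain (M : List X → EReal) (s : List X) (n : ℕ) :
    seg (pathOf M s) (s.length + n) = chain M s n := by
  apply List.ext_getElem
  · rw [seg_length, chain_length]
  · intro i h1 h2
    rw [seg_getElem _ _ _ h1, pathOf_eq M s h2]

lemma pathOf_mem_cyl (M : List X → EReal) (s : List X) : pathOf M s ∈ cyl s := by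
  have := seg_pathOf_eq_chain M s 0
  simpa [cyl, chain] using this

end GUEAux

namespace GUEAux
variable {X : Type*} [Fintype X] [Nonempty X]
variable (Q : List X → (X → EReal) → EReal)

lemma top_le_of_forall {y : EReal} (h : ∀ c : ℝ, (c : EReal) ≤ y) : y = ⊤ := by
  by_contra hy
  obtain ⟨c, h1, h2⟩ := EReal.exists_between_coe_real (lt_top_iff_ne_top.2 hy)
  exact absurd (h c) (not_le.2 h1)

lemma const_le_E {Y : Type*} {E : (Y → EReal) → EReal} (hE : IsUpperExpectation E)
    {f : Y → EReal} (hf : BddBelowF f) {c : ℝ} (h : ∀ y, (c : EReal) ≤ f y) :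
    (c : EReal) ≤ E f := by
  have := hE.mono (fun _ => (c : EReal)) f ⟨c, fun _ => le_rfl⟩ hf h
  rwa [hE.const] at this

lemma min_step (hQ : ∀ s, IsUpperExpectation (Q s)) (M : List X → EReal)
    (hM : IsSupermartingale Q M) (t : List X) : M (t ++ [pick M t]) ≤ M t := by
  obtain ⟨B, hB⟩ := hM.1
  refine le_trans ?_ (hM.2 t)
  have hbdd : BddBelowF (fun x : X => M (t ++ [x])) := ⟨B, fun x => hB _⟩
  rcases eq_or_ne (M (t ++ [pick M t])) ⊤ with h | h
  · have : ∀ c : ℝ, (c : EReal) ≤ Q t (fun x => M (t ++ [x])) := by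
      intro c
      refine const_le_E (hQ t) hbdd fun x => ?_
      have hx := pick_spec M t x
      rw [h] at hx
      exact le_trans le_top hx
    rw [top_le_of_forall this]; exact le_top
  · rcases eq_or_ne (M (t ++ [pick M t])) ⊥ with h' | h'
    · rw [h']; exact bot_le
    · obtain ⟨r, hr⟩ : ∃ r : ℝ, M (t ++ [pick M t]) = (r : EReal) :=
        ⟨_, (EReal.coe_toReal h h').symm⟩
      rw [hr]
      refine const_le_E (hQ t) hbdd fun x => ?_
      rw [← hr]; exact pick_spec M t x

lemma M_chain_le (hQ : ∀ s, IsUpperExpectation (Q s)) (M : List X → EReal)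
    (hM : IsSupermartingale Q M) (s : List X) (n : ℕ) : M (chain M s n) ≤ M s := by
  induction n with
  | zero => exact le_rfl
  | succ n ih => exact le_trans (min_step Q hQ M hM (chain M s n)) ih

lemma exists_path (hQ : ∀ s, IsUpperExpectation (Q s)) (M : List X → EReal)
    (hM : IsSupermartingale Q M) (s : List X) :
    ∃ ω ∈ cyl s, Filter.liminf (fun n => M (seg ω n)) Filter.atTop ≤ M s := by
  refine ⟨pathOf M s, pathOf_mem_cyl M s, ?_⟩
  apply Filter.liminf_le_of_frequently_le'
  apply Filter.Eventually.frequently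
  filter_upwards [Filter.eventually_ge_atTop s.length] with n hn
  obtain ⟨k, rfl⟩ := Nat.exists_eq_add_of_le hn
  rw [seg_pathOf_eq_chain]
  exact M_chain_le Q hQ M hM s k

end GUEAux

namespace GUEAux
variable {X : Type*} [Fintype X] [Nonempty X]
variable (Q : List X → (X → EReal) → EReal)

lemma const_supermartingale (hQ : ∀ s, IsUpperExpectation (Q s)) (c : ℝ) :
    IsSupermartingale Q (fun _ => (c : EReal)) :=
  ⟨⟨c, fun _ => le_rfl⟩, fun t => le_of_eq ((hQ t).const c)⟩

lemma gUE_le_const (hQ : ∀ s, IsUpperExpectation (Q s)) {f : (ℕ → X) → EReal}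
    {s : List X} {c : ℝ} (h : ∀ ω ∈ cyl s, f ω ≤ (c : EReal)) : gUE Q f s ≤ c := by
  apply sInf_le
  exact ⟨fun _ => c, const_supermartingale Q hQ c,
    fun ω hω => by simpa [Filter.liminf_const] using h ω hω, rfl⟩

lemma gUE_le_sup (hQ : ∀ s, IsUpperExpectation (Q s)) (f : (ℕ → X) → EReal)
    (s : List X) : gUE Q f s ≤ ⨆ ω ∈ cyl s, f ω := by
  by_contra hcon
  push_neg at hcon
  obtain ⟨c, h1, h2⟩ := EReal.exists_between_coe_real hcon
  have : gUE Q f s ≤ c := gUE_le_const Q hQ fun ω hω => le_trans (le_biSup f hω) h1.le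
  exact absurd this (not_le.2 h2)

lemma gUE_mono {f g : (ℕ → X) → EReal} {s : List X}
    (h : ∀ ω ∈ cyl s, f ω ≤ g ω) : gUE Q f s ≤ gUE Q g s := by
  apply sInf_le_sInf
  rintro y ⟨M, hM, hdom, hys⟩
  exact ⟨M, hM, fun ω hω => (h ω hω).trans (hdom ω hω), hys⟩

lemma add_supermartingale (hQ : ∀ s, IsUpperExpectation (Q s)) {M N : List X → EReal}
    (hM : IsSupermartingale Q M) (hN : IsSupermartingale Q N) :
    IsSupermartingale Q (fun t => M t + N t) := by
  obtain ⟨B, hB⟩ := hM.1; obtain ⟨C, hC⟩ := hN.1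
  constructor
  · exact ⟨B + C, fun t => by rw [EReal.coe_add]; exact add_le_add (hB t) (hC t)⟩
  · intro t
    calc Q t (fun x => M (t ++ [x]) + N (t ++ [x]))
        ≤ Q t (fun x => M (t ++ [x])) + Q t (fun x => N (t ++ [x])) :=
          (hQ t).subadd _ _ ⟨B, fun x => hB _⟩ ⟨C, fun x => hC _⟩
      _ ≤ M t + N t := add_le_add (hM.2 t) (hN.2 t)

lemma liminf_bddbelow {N : List X → EReal} {C : ℝ} (hC : ∀ t, (C : EReal) ≤ N t)
    (ω : ℕ → X) : (C : EReal) ≤ Filter.liminf (fun n => N (seg ω n)) Filter.atTop :=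
  Filter.le_liminf_of_le (by isBoundedDefault) (Filter.Eventually.of_forall fun n => hC _)

lemma neg_le_of_nonneg_add {a b : EReal} (h : (0 : EReal) ≤ a + b) : -b ≤ a := by
  rcases eq_or_ne b ⊤ with rfl | hbt
  · simp
  rcases eq_or_ne b ⊥ with rfl | hbb
  · rw [EReal.add_bot] at h; exact absurd h (by simp)
  obtain ⟨r, rfl⟩ : ∃ r : ℝ, b = (r : EReal) := ⟨_, (EReal.coe_toReal hbt hbb).symm⟩
  have := (EReal.sub_le_iff_le_add (a := 0) (b := (r : ℝ)) (c := a)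
    (Or.inl (by simp)) (Or.inl (by simp))).2 h
  simpa using this

lemma nonneg_add_of_mem (hQ : ∀ s, IsUpperExpectation (Q s)) {f : (ℕ → X) → EReal}
    {s : List X} {M N : List X → EReal} (hM : IsSupermartingale Q M)
    (hN : IsSupermartingale Q N)
    (hMf : ∀ ω ∈ cyl s, f ω ≤ Filter.liminf (fun n => M (seg ω n)) Filter.atTop)
    (hNf : ∀ ω ∈ cyl s, -(f ω) ≤ Filter.liminf (fun n => N (seg ω n)) Filter.atTop) :
    (0 : EReal) ≤ M s + N s := by
  obtain ⟨B, hB⟩ := hM.1; obtain ⟨C, hC⟩ := hN.1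
  have hP := add_supermartingale Q hQ hM hN
  obtain ⟨ω, hω, hlim⟩ := exists_path Q hQ _ hP s
  refine le_trans ?_ hlim
  have key : (0 : EReal) ≤ Filter.liminf (fun n => M (seg ω n)) Filter.atTop
      + Filter.liminf (fun n => N (seg ω n)) Filter.atTop := by
    rcases eq_or_ne (f ω) ⊤ with hf | hf
    · have h1 : Filter.liminf (fun n => M (seg ω n)) Filter.atTop = ⊤ :=
        top_le_iff.1 (hf ▸ hMf ω hω)
      rw [h1, EReal.top_add_of_ne_bot
        (ne_bot_of_le_ne_bot (by simp) (liminf_bddbelow hC ω))]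
      exact le_top
    rcases eq_or_ne (f ω) ⊥ with hf' | hf'
    · have h1 : Filter.liminf (fun n => N (seg ω n)) Filter.atTop = ⊤ := by
        refine top_le_iff.1 (le_trans ?_ (hNf ω hω)); rw [hf']; simp
      rw [h1, EReal.add_top_of_ne_bot
        (ne_bot_of_le_ne_bot (by simp) (liminf_bddbelow hB ω))]
      exact le_top
    obtain ⟨r, hr⟩ : ∃ r : ℝ, f ω = (r : EReal) := ⟨_, (EReal.coe_toReal hf hf').symm⟩
    have h1 := hMf ω hω; have h2 := hNf ω hω
    rw [hr] at h1 h2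
    refine le_trans (le_of_eq ?_) (add_le_add h1 (show -(r:EReal) ≤ _ by exact h2))
    rw [show -(r:EReal) = ((-r : ℝ) : EReal) by rw [EReal.coe_neg], ← EReal.coe_add]
    norm_num
  exact le_trans key EReal.le_liminf_add

end GUEAux

namespace GUEAux
variable {X : Type*} [Fintype X] [Nonempty X]
variable (Q : List X → (X → EReal) → EReal)

lemma gUE_eadd_pair (hQ : ∀ s, IsUpperExpectation (Q s)) {f g : (ℕ → X) → EReal}
    {s : List X} {M N : List X → EReal} (hM : IsSupermartingale Q M)
    (hN : IsSupermartingale Q N)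
    (hMf : ∀ ω ∈ cyl s, f ω ≤ Filter.liminf (fun n => M (seg ω n)) Filter.atTop)
    (hNf : ∀ ω ∈ cyl s, g ω ≤ Filter.liminf (fun n => N (seg ω n)) Filter.atTop) :
    gUE Q (fun ω => eadd (f ω) (g ω)) s ≤ M s + N s := by
  obtain ⟨B, hB⟩ := hM.1; obtain ⟨C, hC⟩ := hN.1
  apply sInf_le
  refine ⟨fun t => M t + N t, add_supermartingale Q hQ hM hN, fun ω hω => ?_, rfl⟩
  refine le_trans ?_ (EReal.le_liminf_add (u := fun n => M (seg ω n))
    (v := fun n => N (seg ω n)))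
  rcases eq_or_ne (f ω) ⊤ with hf | hf
  · simp only [eadd]; rw [if_pos (Or.inl hf)]
    have h1 : Filter.liminf (fun n => M (seg ω n)) Filter.atTop = ⊤ :=
      top_le_iff.1 (hf ▸ hMf ω hω)
    rw [h1, EReal.top_add_of_ne_bot
      (ne_bot_of_le_ne_bot (by simp) (liminf_bddbelow hC ω))]
  rcases eq_or_ne (g ω) ⊤ with hg | hg
  · simp only [eadd]; rw [if_pos (Or.inr hg)]
    have h1 : Filter.liminf (fun n => N (seg ω n)) Filter.atTop = ⊤ :=
      top_le_iff.1 (hg ▸ hNf ω hω)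
    rw [h1, EReal.add_top_of_ne_bot
      (ne_bot_of_le_ne_bot (by simp) (liminf_bddbelow hB ω))]
  · simp only [eadd]; rw [if_neg (by tauto)]
    exact add_le_add (hMf ω hω) (hNf ω hω)

lemma gUE_eadd_le (hQ : ∀ s, IsUpperExpectation (Q s)) (f g : (ℕ → X) → EReal)
    (s : List X) :
    gUE Q (fun ω => eadd (f ω) (g ω)) s ≤ eadd (gUE Q f s) (gUE Q g s) := by
  rcases eq_or_ne (gUE Q f s) ⊤ with hA | hA
  · simp only [eadd]; rw [if_pos (Or.inl hA)]; exact le_top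
  rcases eq_or_ne (gUE Q g s) ⊤ with hB | hB
  · simp only [eadd]; rw [if_pos (Or.inr hB)]; exact le_top
  simp only [eadd]; rw [if_neg (by tauto)]
  refine EReal.le_add_of_forall_gt (Or.inr hB) (Or.inl hA) fun a ha b hb => ?_
  obtain ⟨m, ⟨M, hM, hMf, hms⟩, hma⟩ := sInf_lt_iff.1 ha
  obtain ⟨n, ⟨N, hN, hNf, hns⟩, hnb⟩ := sInf_lt_iff.1 hb
  subst hms; subst hns
  exact le_trans (gUE_eadd_pair Q hQ hM hN hMf hNf) (add_le_add hma.le hnb.le)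

lemma add_const_supermartingale (hQ : ∀ s, IsUpperExpectation (Q s))
    {M : List X → EReal} (hM : IsSupermartingale Q M) (c : ℝ) :
    IsSupermartingale Q (fun t => M t + (c : EReal)) := by
  obtain ⟨B, hB⟩ := hM.1
  constructor
  · exact ⟨B + c, fun t => by rw [EReal.coe_add]; exact add_le_add (hB t) le_rfl⟩
  · intro t
    calc Q t (fun x => M (t ++ [x]) + (c : EReal))
        ≤ Q t (fun x => M (t ++ [x])) + Q t (fun _ => (c : EReal)) :=
          (hQ t).subadd _ _ ⟨B, fun x => hB _⟩ ⟨c, fun _ => le_rfl⟩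
      _ = Q t (fun x => M (t ++ [x])) + (c : EReal) := by rw [(hQ t).const]
      _ ≤ M t + (c : EReal) := add_le_add (hM.2 t) le_rfl

lemma liminf_add_const_ge {u : ℕ → EReal} (c : ℝ) :
    Filter.liminf u Filter.atTop + (c : EReal) ≤
      Filter.liminf (fun n => u n + (c : EReal)) Filter.atTop := by
  have := EReal.le_liminf_add (u := u) (v := fun _ => (c : EReal)) (f := Filter.atTop)
  rwa [Filter.liminf_const] at this

lemma gUE_add_const_le (hQ : ∀ s, IsUpperExpectation (Q s)) (f : (ℕ → X) → EReal)
    (s : List X) (c : ℝ) :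
    gUE Q (fun ω => f ω + (c : EReal)) s ≤ gUE Q f s + (c : EReal) := by
  rw [← EReal.sub_le_iff_le_add (Or.inl (by simp)) (Or.inl (by simp))]
  refine le_sInf ?_
  rintro y ⟨M, hM, hdom, rfl⟩
  rw [EReal.sub_le_iff_le_add (Or.inl (by simp)) (Or.inl (by simp))]
  apply sInf_le
  refine ⟨fun t => M t + (c : EReal), add_const_supermartingale Q hQ hM c,
    fun ω hω => ?_, rfl⟩
  exact le_trans (add_le_add (hdom ω hω) le_rfl) (liminf_add_const_ge c)

noncomputable def mulIso (c : ℝ) (hc : 0 < c) : EReal ≃o EReal where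
  toFun a := (c : EReal) * a
  invFun a := a / (c : EReal)
  left_inv a := by
    show (c : EReal) * a / (c : EReal) = a
    rw [mul_comm, ← EReal.mul_div a (c : EReal) (c : EReal),
      EReal.div_self (EReal.coe_ne_bot c) (EReal.coe_ne_top c)
        (by exact_mod_cast hc.ne'), mul_one]
  right_inv a :=
    EReal.mul_div_cancel (EReal.coe_ne_bot c) (EReal.coe_ne_top c)
      (by exact_mod_cast hc.ne')
  map_rel_iff' := by
    intro a b
    simp only [Equiv.coe_fn_mk]
    constructor
    · intro h
      have h2 := EReal.div_le_div_right_of_nonneg (c := (c : EReal))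
        (by exact_mod_cast hc.le) h
      have e1 : (c : EReal) * a / (c : EReal) = a := by
        rw [mul_comm, ← EReal.mul_div a (c : EReal) (c : EReal),
          EReal.div_self (EReal.coe_ne_bot c) (EReal.coe_ne_top c)
            (by exact_mod_cast hc.ne'), mul_one]
      have e2 : (c : EReal) * b / (c : EReal) = b := by
        rw [mul_comm, ← EReal.mul_div b (c : EReal) (c : EReal),
          EReal.div_self (EReal.coe_ne_bot c) (EReal.coe_ne_top c)
            (by exact_mod_cast hc.ne'), mul_one]
      rwa [e1, e2] at h2
    · intro h
      exact mul_le_mul_of_nonneg_left h (by exact_mod_cast hc.le)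

lemma liminf_const_mul {u : ℕ → EReal} (c : ℝ) (hc : 0 < c) :
    Filter.liminf (fun n => (c : EReal) * u n) Filter.atTop =
      (c : EReal) * Filter.liminf u Filter.atTop :=
  ((mulIso c hc).liminf_apply).symm

end GUEAux

namespace GUEAux
variable {X : Type*} [Fintype X] [Nonempty X]
variable (Q : List X → (X → EReal) → EReal)

lemma sub_coe_nonneg {y : EReal} {B : ℝ} (h : (B : EReal) ≤ y) :
    (0 : EReal) ≤ y - (B : EReal) := by
  rw [sub_eq_add_neg]
  refine le_trans (le_of_eq ?_) (add_le_add h le_rfl)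
  rw [← EReal.coe_neg, ← EReal.coe_add]
  norm_num

lemma nonneg_decomp {y : EReal} {B c : ℝ} (h : (B : EReal) ≤ y) (hc : 0 < c) :
    (c : EReal) * y = (c : EReal) * (y - (B : EReal)) + ((c * B : ℝ) : EReal) := by
  rcases eq_or_ne y ⊤ with rfl | ht
  · rw [EReal.coe_mul_top_of_pos hc, EReal.top_sub_coe, EReal.coe_mul_top_of_pos hc,
      EReal.top_add_of_ne_bot (EReal.coe_ne_bot _)]
  rcases eq_or_ne y ⊥ with rfl | hb
  · exact absurd h (by simp)
  obtain ⟨r, rfl⟩ : ∃ r : ℝ, y = (r : EReal) := ⟨_, (EReal.coe_toReal ht hb).symm⟩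
  rw [← EReal.coe_sub, ← EReal.coe_mul, ← EReal.coe_mul, ← EReal.coe_add]
  norm_cast
  ring

lemma smul_supermartingale (hQ : ∀ s, IsUpperExpectation (Q s)) {M : List X → EReal}
    (hM : IsSupermartingale Q M) {c : ℝ} (hc : 0 < c) :
    IsSupermartingale Q (fun t => (c : EReal) * M t) := by
  obtain ⟨B, hB⟩ := hM.1
  have hpos : (0 : EReal) < (c : EReal) := by exact_mod_cast hc
  constructor
  · refine ⟨c * B, fun t => ?_⟩
    rw [EReal.coe_mul]
    exact mul_le_mul_of_nonneg_left (hB t) hpos.le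
  · intro t
    have h1 : Q t (fun x => (c : EReal) * M (t ++ [x])) ≤
        Q t (fun x => (c : EReal) * (M (t ++ [x]) - (B : EReal))) + ((c * B : ℝ) : EReal) := by
      have hs := (hQ t).subadd (fun x => (c : EReal) * (M (t ++ [x]) - (B : EReal)))
        (fun _ => ((c * B : ℝ) : EReal))
        ⟨0, fun x => by simpa using mul_nonneg hpos.le (sub_coe_nonneg (hB _))⟩
        ⟨c * B, fun _ => le_rfl⟩
      rw [(hQ t).const] at hs
      refine le_trans (le_of_eq ?_) hs
      congr 1; funext x; exact nonneg_decomp (hB _) hc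
    have h2 : Q t (fun x => (c : EReal) * (M (t ++ [x]) - (B : EReal))) =
        (c : EReal) * Q t (fun x => M (t ++ [x]) - (B : EReal)) :=
      (hQ t).homog _ hpos _ ⟨0, fun x => by simpa using sub_coe_nonneg (hB _)⟩
        (fun x => sub_coe_nonneg (hB _))
    have h3 : Q t (fun x => M (t ++ [x]) - (B : EReal)) ≤ M t - (B : EReal) := by
      have hs := (hQ t).subadd (fun x => M (t ++ [x])) (fun _ => ((-B : ℝ) : EReal))
        ⟨B, fun x => hB _⟩ ⟨-B, fun _ => le_rfl⟩
      rw [(hQ t).const] at hs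
      refine le_trans (le_of_eq ?_) (le_trans hs ?_)
      · rfl
      · rw [sub_eq_add_neg, ← EReal.coe_neg]
        exact add_le_add (hM.2 t) le_rfl
    calc Q t (fun x => (c : EReal) * M (t ++ [x]))
        ≤ (c : EReal) * Q t (fun x => M (t ++ [x]) - (B : EReal)) + ((c * B : ℝ) : EReal) := by
          rw [← h2]; exact h1
      _ ≤ (c : EReal) * (M t - (B : EReal)) + ((c * B : ℝ) : EReal) :=
          add_le_add (mul_le_mul_of_nonneg_left h3 hpos.le) le_rfl
      _ = (c : EReal) * M t := (nonneg_decomp (hB t) hc).symm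

lemma gUE_smul_le (hQ : ∀ s, IsUpperExpectation (Q s)) (f : (ℕ → X) → EReal)
    (s : List X) {c : ℝ} (hc : 0 < c) :
    gUE Q (fun ω => (c : EReal) * f ω) s ≤ (c : EReal) * gUE Q f s := by
  have hpos : (0 : EReal) < (c : EReal) := by exact_mod_cast hc
  rw [← EReal.div_le_iff_le_mul hpos (EReal.coe_ne_top c)]
  refine le_sInf ?_
  rintro y ⟨M, hM, hdom, rfl⟩
  rw [EReal.div_le_iff_le_mul hpos (EReal.coe_ne_top c)]
  apply sInf_le
  refine ⟨fun t => (c : EReal) * M t, smul_supermartingale Q hQ hM hc, fun ω hω => ?_, rfl⟩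
  rw [liminf_const_mul c hc]
  exact mul_le_mul_of_nonneg_left (hdom ω hω) hpos.le

lemma gUE_smul (hQ : ∀ s, IsUpperExpectation (Q s)) (f : (ℕ → X) → EReal)
    (s : List X) {c : ℝ} (hc : 0 < c) :
    gUE Q (fun ω => (c : EReal) * f ω) s = (c : EReal) * gUE Q f s := by
  refine le_antisymm (gUE_smul_le Q hQ f s hc) ?_
  have h := gUE_smul_le Q hQ (fun ω => (c : EReal) * f ω) s (inv_pos.2 hc)
  have e : (fun ω => ((c⁻¹ : ℝ) : EReal) * ((c : EReal) * f ω)) = f := by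
    funext ω
    rw [← mul_assoc, ← EReal.coe_mul, inv_mul_cancel₀ hc.ne', EReal.coe_one, one_mul]
  rw [e] at h
  calc (c : EReal) * gUE Q f s
      ≤ (c : EReal) * (((c⁻¹ : ℝ) : EReal) * gUE Q (fun ω => (c : EReal) * f ω) s) :=
        mul_le_mul_of_nonneg_left h (by exact_mod_cast hc.le)
    _ = gUE Q (fun ω => (c : EReal) * f ω) s := by
        rw [← mul_assoc, ← EReal.coe_mul, mul_inv_cancel₀ hc.ne', EReal.coe_one, one_mul]

lemma gUE_ge_path (hQ : ∀ s, IsUpperExpectation (Q s)) {f : (ℕ → X) → EReal}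
    {s : List X} {c : ℝ} (h : ∀ ω ∈ cyl s, (c : EReal) ≤ f ω) :
    (c : EReal) ≤ gUE Q f s := by
  refine le_sInf ?_
  rintro y ⟨M, hM, hdom, rfl⟩
  obtain ⟨ω, hω, hlim⟩ := exists_path Q hQ M hM s
  exact le_trans (h ω hω) (le_trans (hdom ω hω) hlim)

lemma gUE_const (hQ : ∀ s, IsUpperExpectation (Q s)) (s : List X) (c : ℝ) :
    gUE Q (fun _ => (c : EReal)) s = (c : EReal) :=
  le_antisymm (gUE_le_const Q hQ fun _ _ => le_rfl)
    (gUE_ge_path Q hQ fun _ _ => le_rfl)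

end GUEAux

namespace GUEAux
lemma le_neg_of_le_neg' {a b : EReal} (h : a ≤ -b) : b ≤ -a := EReal.le_neg_of_le_neg h
end GUEAux

/-- Basic coherence properties V1–V6 of the game-theoretic upper expectation. -/
theorem stmt10 {X : Type*} [Fintype X] [Nonempty X]
    (Q : List X → (X → EReal) → EReal) (hQ : ∀ s, IsUpperExpectation (Q s))
    (f g : (ℕ → X) → EReal) (lam : ℝ) (hlam : 0 ≤ lam) (μ : ℝ) (s : List X) :
    -- V1
    (gUE Q f s ≤ ⨆ ω ∈ cyl s, f ω) ∧
    -- V2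
    (gUE Q (fun ω => eadd (f ω) (g ω)) s ≤ eadd (gUE Q f s) (gUE Q g s)) ∧
    -- V3
    (gUE Q (fun ω => (lam : EReal) * f ω) s = (lam : EReal) * gUE Q f s) ∧
    -- V4
    ((∀ ω ∈ cyl s, f ω ≤ g ω) → gUE Q f s ≤ gUE Q g s) ∧
    -- V5
    (((⨅ ω ∈ cyl s, f ω) ≤ -(gUE Q (fun ω => -(f ω)) s)) ∧
      (-(gUE Q (fun ω => -(f ω)) s) ≤ gUE Q f s) ∧
      (gUE Q f s ≤ ⨆ ω ∈ cyl s, f ω)) ∧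
    -- V6
    (gUE Q (fun ω => f ω + (μ : EReal)) s = gUE Q f s + (μ : EReal)) := by
  refine ⟨GUEAux.gUE_le_sup Q hQ f s, GUEAux.gUE_eadd_le Q hQ f g s, ?_,
    fun h => GUEAux.gUE_mono Q h, ⟨?_, ?_, GUEAux.gUE_le_sup Q hQ f s⟩, ?_⟩
  · -- V3
    rcases hlam.eq_or_lt with h0 | h0
    · have e : (fun ω => ((lam : ℝ) : EReal) * f ω) = fun _ => ((0 : ℝ) : EReal) := by
        funext ω; rw [← h0]; simp
      rw [e, GUEAux.gUE_const Q hQ s 0, ← h0]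
      simp
    · exact GUEAux.gUE_smul Q hQ f s h0
  · -- V5 left
    refine GUEAux.le_neg_of_le_neg' ?_
    refine le_trans (GUEAux.gUE_le_sup Q hQ _ s) ?_
    refine iSup₂_le fun ω hω => ?_
    rw [EReal.neg_le_neg_iff]
    exact iInf₂_le ω hω
  · -- V5 middle
    refine le_sInf ?_
    rintro y ⟨M, hM, hMf, rfl⟩
    rw [EReal.neg_le]
    refine le_sInf ?_
    rintro z ⟨N, hN, hNf, rfl⟩
    refine GUEAux.neg_le_of_nonneg_add ?_
    exact GUEAux.nonneg_add_of_mem Q hQ hN hM hNf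
      (fun ω hω => by rw [neg_neg]; exact hMf ω hω)
  · -- V6
    refine le_antisymm (GUEAux.gUE_add_const_le Q hQ f s μ) ?_
    have h := GUEAux.gUE_add_const_le Q hQ (fun ω => f ω + (μ : EReal)) s (-μ)
    have e : (fun ω => (f ω + (μ : EReal)) + ((-μ : ℝ) : EReal)) = f := by
      funext ω
      rw [EReal.coe_neg, ← sub_eq_add_neg, EReal.add_sub_cancel_right]
    rw [e, EReal.coe_neg, ← sub_eq_add_neg] at h
    exact (EReal.le_sub_iff_add_le (Or.inl (by simp)) (Or.inl (by simp))).1 h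
end

section
/- Let X be a finite non-empty set with an imprecise probability tree and associated game-theoretic upper expectation Ē_V. For any bounded-below f : Ω → ℝ̄, the process P defined by P(s) := Ē_V(f|s) for all s ∈ X* is a supermartingale. -/
open Filter Topology

/-!
Ē_V(f | s) is at least `inf f`: by finiteness of `X` and E1/E4, every supermartingale can move
from each situation to a child where it does not increase, so following such children from `s`
yields a path in `Γ(s)` along which `liminf M ≤ M(s)`; hence `M(s) ≥ inf f` for every `M` in the
defining infimum. The supermartingale inequality holds because any `M` admissible at `s` is also
admissible at every child `sx`, so `Ē_V(f | s·) ≤ M(s·)` pointwise and E4 gives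
`Q_s(Ē_V(f | s·)) ≤ Q_s(M(s·)) ≤ M(s)`.
-/

section Branch

variable {X : Type*}

@[simp]
lemma length_seg (ω : ℕ → X) (n : ℕ) : (seg ω n).length = n := by
  simp [seg]

@[simp]
lemma getElem_seg (ω : ℕ → X) (n i : ℕ) (h : i < (seg ω n).length) : (seg ω n)[i] = ω i := by
  simp [seg]

@[simp]
lemma mem_cyl {ω : ℕ → X} {s : List X} : ω ∈ cyl s ↔ seg ω s.length = s := Iff.rfl

lemma seg_prefix_seg (ω : ℕ → X) {n m : ℕ} (h : n ≤ m) : seg ω n <+: seg ω m := by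
  rw [List.prefix_iff_eq_take]
  exact List.ext_getElem (by simp [h]) fun i _ _ => by simp

lemma cyl_append_subset (s t : List X) : cyl (s ++ t) ⊆ cyl s := by
  intro ω hω
  have hpre := seg_prefix_seg ω (show s.length ≤ (s ++ t).length by simp)
  rw [mem_cyl.1 hω, List.prefix_iff_eq_take] at hpre
  simpa using hpre

def extendAlong (next : List X → X) (s : List X) (n : ℕ) : List X :=
  (fun t => t ++ [next t])^[n] s

variable (next : List X → X) (s : List X)

lemma extendAlong_succ (n : ℕ) :
    extendAlong next s (n + 1) = extendAlong next s n ++ [next (extendAlong next s n)] :=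
  Function.iterate_succ_apply' _ _ _

@[simp]
lemma length_extendAlong (n : ℕ) : (extendAlong next s n).length = s.length + n := by
  induction n with
  | zero => rfl
  | succ n ih => simp [extendAlong_succ, ih, Nat.add_assoc]

lemma extendAlong_prefix {n m : ℕ} (h : n ≤ m) :
    extendAlong next s n <+: extendAlong next s m := by
  induction m, h using Nat.le_induction with
  | base => exact List.prefix_refl _
  | succ m _ ih => exact ih.trans (extendAlong_succ next s m ▸ List.prefix_append _ _)

def branchAlong (i : ℕ) : X :=
  (extendAlong next s (i + 1))[i]'(by simp; omega)

lemma seg_branchAlong (n : ℕ) :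
    seg (branchAlong next s) (s.length + n) = extendAlong next s n := by
  refine List.ext_getElem (by simp) fun i _ hi => ?_
  rw [getElem_seg, branchAlong]
  rcases le_total n (i + 1) with h | h
  · exact ((extendAlong_prefix next s h).getElem hi).symm
  · exact (extendAlong_prefix next s h).getElem _

lemma branchAlong_mem_cyl : branchAlong next s ∈ cyl s := by
  simpa [extendAlong] using seg_branchAlong next s 0

end Branch

section Supermartingale

variable {X : Type*} {Q : List X → (X → EReal) → EReal} {M : List X → EReal}

lemma IsSupermartingale.exists_append_le [Finite X] [Nonempty X]
    (hM : IsSupermartingale Q M) (t : List X) (hQ : IsUpperExpectation (Q t)) :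
    ∃ x, M (t ++ [x]) ≤ M t := by
  obtain ⟨B, hB⟩ := hM.1
  obtain ⟨x₀, hx₀⟩ := Finite.exists_min fun x => M (t ++ [x])
  refine ⟨x₀, not_lt.1 fun hlt => ?_⟩
  obtain ⟨r, hMr, hr⟩ := EReal.lt_iff_exists_real_btwn.1 hlt
  have : (r : EReal) ≤ M t :=
    calc (r : EReal) = Q t (fun _ => (r : EReal)) := (hQ.const r).symm
      _ ≤ Q t (fun x => M (t ++ [x])) :=
        hQ.mono _ _ ⟨r, fun _ => le_rfl⟩ ⟨B, fun _ => hB _⟩ fun x => hr.le.trans (hx₀ x)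
      _ ≤ M t := hM.2 t
  exact (this.trans_lt hMr).false

lemma IsSupermartingale.exists_mem_cyl_liminf_le [Finite X] [Nonempty X]
    (hM : IsSupermartingale Q M) (hQ : ∀ s, IsUpperExpectation (Q s)) (s : List X) :
    ∃ ω ∈ cyl s, liminf (fun n => M (seg ω n)) atTop ≤ M s := by
  choose next hnext using fun t => hM.exists_append_le t (hQ t)
  have hdecr : ∀ n, M (extendAlong next s n) ≤ M s := by
    intro n
    induction n with
    | zero => rfl
    | succ n ih => exact (extendAlong_succ next s n ▸ hnext _).trans ih
  refine ⟨branchAlong next s, branchAlong_mem_cyl next s,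
    liminf_le_of_frequently_le' (Eventually.frequently ?_)⟩
  filter_upwards [eventually_ge_atTop s.length] with n hn
  obtain ⟨k, rfl⟩ := Nat.exists_eq_add_of_le hn
  exact seg_branchAlong next s k ▸ hdecr k

lemma le_gUE [Finite X] [Nonempty X] (hQ : ∀ s, IsUpperExpectation (Q s))
    {f : (ℕ → X) → EReal} {B : EReal} (hB : ∀ ω, B ≤ f ω) (s : List X) : B ≤ gUE Q f s := by
  refine le_sInf ?_
  rintro _ ⟨M, hM, hlim, rfl⟩
  obtain ⟨ω, hω, hliminf⟩ := hM.exists_mem_cyl_liminf_le hQ s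
  exact (hB ω).trans ((hlim ω hω).trans hliminf)

lemma gUE_append_le {f : (ℕ → X) → EReal} {s : List X} (hM : IsSupermartingale Q M)
    (hlim : ∀ ω ∈ cyl s, f ω ≤ liminf (fun n => M (seg ω n)) atTop) (t : List X) :
    gUE Q f (s ++ t) ≤ M (s ++ t) :=
  sInf_le ⟨M, hM, fun ω hω => hlim ω (cyl_append_subset s t hω), rfl⟩

end Supermartingale

/-- Corollary 3: for bounded-below `f`, the process `s ↦ Ē_V(f | s)` is a
supermartingale. -/
theorem stmt14 {X : Type*} [Fintype X] [Nonempty X]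
    (Q : List X → (X → EReal) → EReal) (hQ : ∀ s, IsUpperExpectation (Q s))
    (f : (ℕ → X) → EReal) (hb : BddBelowF f) :
    IsSupermartingale Q (fun s => gUE Q f s) := by
  obtain ⟨B, hB⟩ := hb
  have hbdd : ∀ s, (B : EReal) ≤ gUE Q f s := le_gUE hQ hB
  refine ⟨⟨B, hbdd⟩, fun s => le_sInf ?_⟩
  rintro _ ⟨M, hM, hlim, rfl⟩
  obtain ⟨B', hB'⟩ := hM.1
  calc Q s (fun x => gUE Q f (s ++ [x]))
      ≤ Q s (fun x => M (s ++ [x])) := (hQ s).mono _ _ ⟨B, fun _ => hbdd _⟩ ⟨B', fun _ => hB' _⟩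
        fun x => gUE_append_le hM hlim [x]
    _ ≤ M s := hM.2 s
end
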